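/- arXiv:2307.09219 — 18 statements merged into one kernel-verified Lean document; each statement's English description precedes it below -/
import Mathlib

section
/- For every real number θ, set P₊ = 2·exp(iθ) + exp(−2iθ), P₋ = −2·exp(iθ) + exp(−2iθ) and T = exp(4iθ) + 2·exp(−2iθ). Then: (i) Q(P₊) = Q(P₋) = Q(T) = 0, i.e. all three points lie on the standard deltoid; (ii) 2·T = (1 + cos 3θ)·P₊ + (1 − cos 3θ)·P₋, so T lies on the closed segment joining P₊ and P₋; (iii) |P₊ − P₋| = 4; (iv) the parameterization δ(t) = 2·exp(it) + exp(−2it) of the deltoid satisfies δ(−2θ) = T and δ′(−2θ) = 4·sin(3θ)·exp(iθ), which is a real scalar multiple of P₊ − P₋ = 4·exp(iθ) (so the segment joining P₋ and P₊ is tangent to the deltoid at T). -/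
open Complex ComplexConjugate

/-- `Q z = z²·conj(z)² − 4(z³ + conj(z)³) + 18·z·conj(z) − 27`;
the standard deltoid is `{z : ℂ | Q z = 0}`. -/
noncomputable def Q (z : ℂ) : ℂ :=
  z ^ 2 * (conj z) ^ 2 - 4 * (z ^ 3 + (conj z) ^ 3) + 18 * z * conj z - 27

theorem deltoid_needle_tangent (θ : ℝ) :
    let Pp : ℂ := 2 * exp (I * θ) + exp (-2 * I * θ)
    let Pm : ℂ := -2 * exp (I * θ) + exp (-2 * I * θ)
    let T : ℂ := exp (4 * I * θ) + 2 * exp (-2 * I * θ)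
    let δ : ℝ → ℂ := fun t => 2 * exp (I * t) + exp (-2 * I * t)
    Q Pp = 0 ∧ Q Pm = 0 ∧ Q T = 0 ∧
    2 * T = ((1 + Real.cos (3 * θ) : ℝ) : ℂ) * Pp + ((1 - Real.cos (3 * θ) : ℝ) : ℂ) * Pm ∧
    ‖Pp - Pm‖ = 4 ∧
    δ (-2 * θ) = T ∧
    HasDerivAt δ (((4 * Real.sin (3 * θ) : ℝ) : ℂ) * exp (I * θ)) (-2 * θ) ∧
    Pp - Pm = 4 * exp (I * θ) ∧
    (∃ r : ℝ, ((4 * Real.sin (3 * θ) : ℝ) : ℂ) * exp (I * θ) = (r : ℂ) * (Pp - Pm)) := by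
  intro Pp Pm T δ
  set a : ℂ := exp (I * θ) with ha
  set b : ℂ := exp (-(I * θ)) with hb
  have hab : a * b = 1 := by rw [ha, hb, ← Complex.exp_add, add_neg_cancel, Complex.exp_zero]
  have hconj_a : conj a = b := by
    rw [ha, hb, ← Complex.exp_conj]
    simp
  have hconj_b : conj b = a := by
    rw [ha, hb, ← Complex.exp_conj]
    simp
  have hb2 : exp (-2 * I * θ) = b ^ 2 := by
    rw [hb, sq, ← Complex.exp_add]; ring_nf
  have ha4 : exp (4 * I * θ) = a ^ 4 := by
    rw [ha, ← Complex.exp_nat_mul]; ring_nf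
  have h3a : a ^ 3 = Complex.cos (3 * (θ : ℂ)) + Complex.sin (3 * (θ : ℂ)) * I := by
    have : a ^ 3 = exp ((3 * (θ : ℂ)) * I) := by
      rw [ha, ← Complex.exp_nat_mul]; push_cast; ring_nf
    rw [this, Complex.exp_mul_I]
  have h3b : b ^ 3 = Complex.cos (3 * (θ : ℂ)) - Complex.sin (3 * (θ : ℂ)) * I := by
    have : b ^ 3 = exp ((-(3 * (θ : ℂ))) * I) := by
      rw [hb, ← Complex.exp_nat_mul]; push_cast; ring_nf
    rw [this, Complex.exp_mul_I, Complex.cos_neg, Complex.sin_neg]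
    ring
  have hc3 : a ^ 3 + b ^ 3 = 2 * Complex.cos (3 * (θ : ℂ)) := by
    rw [h3a, h3b]; ring
  have hs3 : a ^ 3 - b ^ 3 = 2 * I * Complex.sin (3 * (θ : ℂ)) := by
    rw [h3a, h3b]; ring
  have hPp : Pp = 2 * a + b ^ 2 := by
    show 2 * a + exp (-2 * I * θ) = 2 * a + b ^ 2
    rw [hb2]
  have hPm : Pm = -2 * a + b ^ 2 := by
    show -2 * a + exp (-2 * I * θ) = -2 * a + b ^ 2
    rw [hb2]
  have hT : T = a ^ 4 + 2 * b ^ 2 := by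
    show exp (4 * I * θ) + 2 * exp (-2 * I * θ) = a ^ 4 + 2 * b ^ 2
    rw [hb2, ha4]
  have hQPp : Q Pp = 0 := by
    rw [hPp]
    unfold Q
    simp only [map_add, map_mul, map_pow, map_ofNat, hconj_a, hconj_b]
    linear_combination (27 + (-4)*b^3 + (-45)*a*b + 4*a*b^4 + 17*a^2*b^2 + (-4)*a^3
      + a^3*b^3 + 4*a^4*b) * hab
  have hQPm : Q Pm = 0 := by
    rw [hPm]
    unfold Q
    simp only [map_add, map_mul, map_pow, map_neg, map_ofNat, hconj_a, hconj_b]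
    linear_combination (27 + 4*b^3 + (-45)*a*b + (-4)*a*b^4 + 17*a^2*b^2 + 4*a^3
      + a^3*b^3 + (-4)*a^4*b) * hab
  have hQT : Q T = 0 := by
    rw [hT]
    unfold Q
    simp only [map_add, map_mul, map_pow, map_ofNat, hconj_a, hconj_b]
    linear_combination (27 + (-4)*b^6 + 27*a*b + (-4)*a*b^7 + (-45)*a^2*b^2 + 4*a^2*b^8
      + (-45)*a^3*b^3 + 4*a^3*b^9 + 17*a^4*b^4 + 17*a^5*b^5 + (-4)*a^6 + a^6*b^6
      + (-4)*a^7*b + a^7*b^7 + 4*a^8*b^2 + 4*a^9*b^3) * hab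
  refine ⟨hQPp, hQPm, hQT, ?_, ?_, ?_, ?_, ?_, ?_⟩
  · rw [hPp, hPm, hT]
    push_cast
    linear_combination 2 * a * hc3 - 2 * b ^ 2 * hab
  · have h4a : Pp - Pm = 4 * a := by rw [hPp, hPm]; ring
    rw [h4a, ha, norm_mul, Complex.norm_exp]
    simp
  · show 2 * exp (I * ((-2 * θ : ℝ) : ℂ)) + exp (-2 * I * ((-2 * θ : ℝ) : ℂ)) = T
    rw [hT]
    have e1 : (I * ((-2 * θ : ℝ) : ℂ)) = -2 * I * θ := by push_cast; ring
    have e2 : (-2 * I * ((-2 * θ : ℝ) : ℂ)) = 4 * I * θ := by push_cast; ring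
    rw [e1, e2, hb2, ha4]; ring
  · have h1 : HasDerivAt (fun t : ℝ => (t : ℂ)) 1 (-2 * θ) := by
      simpa using (hasDerivAt_id (-2 * θ)).ofReal_comp
    have h2 : HasDerivAt (fun t : ℝ => I * (t : ℂ)) I (-2 * θ) := by
      simpa using h1.const_mul I
    have h3 : HasDerivAt (fun t : ℝ => -2 * I * (t : ℂ)) (-2 * I) (-2 * θ) := by
      simpa using h1.const_mul (-2 * I)
    have h4 := (h2.cexp.const_mul (2 : ℂ)).add h3.cexp
    have heq : (2 : ℂ) * (exp (I * ((-2 * θ : ℝ) : ℂ)) * I) +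
        exp (-2 * I * ((-2 * θ : ℝ) : ℂ)) * (-2 * I) =
        ((4 * Real.sin (3 * θ) : ℝ) : ℂ) * a := by
      have e1 : (I * ((-2 * θ : ℝ) : ℂ)) = -2 * I * θ := by push_cast; ring
      have e2 : (-2 * I * ((-2 * θ : ℝ) : ℂ)) = 4 * I * θ := by push_cast; ring
      rw [e1, e2, hb2, ha4]
      push_cast
      linear_combination (-2 * I * a) * hs3 + (-2 * I * b ^ 2) * hab +
        (-4 * a * Complex.sin (3 * (θ : ℂ))) * Complex.I_sq
    rw [← heq]
    exact h4
  · rw [hPp, hPm]; ring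
  · refine ⟨Real.sin (3 * θ), ?_⟩
    rw [hPp, hPm]
    push_cast
    ring
end

section
/- For every real number θ, set γ = exp(−2iθ) + 2·exp(iθ), γ′ = exp(−2iθ) − 2·exp(iθ) and β′ = −exp(−2iθ), and let δ(t) = 2·exp(it) + exp(−2it), so δ(θ) = γ and δ(θ+π) = γ′. Then: (i) Re[(γ − β′)·conj(γ′ − β′)] = 0 (the line L through γ and β′ is perpendicular to the line L′ through γ′ and β′); (ii) Im[δ′(θ)·conj(γ − β′)] = 0 (L is parallel to the tangent direction of the deltoid at γ, i.e. L is tangent to the deltoid at γ); (iii) Im[δ′(θ+π)·conj(γ′ − β′)] = 0 (L′ is tangent to the deltoid at γ′). -/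
open Complex ComplexConjugate

lemma deriv_delta (t : ℝ) :
    deriv (fun t : ℝ => 2 * exp (I * t) + exp (-2 * I * t)) t
      = 2 * I * exp (I * t) - 2 * I * exp (-2 * I * t) := by
  have h1 : HasDerivAt (fun z : ℂ => exp (I * z)) (exp (I * t) * I) (t : ℂ) := by
    simpa [Function.comp_def, neg_mul, mul_assoc] using (Complex.hasDerivAt_exp (I * t)).comp (t : ℂ)
      ((hasDerivAt_id (t : ℂ)).const_mul I)
  have h2 : HasDerivAt (fun z : ℂ => exp (-2 * I * z)) (exp (-2 * I * t) * (-2 * I)) (t : ℂ) := by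
    simpa [Function.comp_def, neg_mul, mul_assoc] using (Complex.hasDerivAt_exp (-2 * I * t)).comp (t : ℂ)
      ((hasDerivAt_id (t : ℂ)).const_mul (-2 * I))
  have h : HasDerivAt (fun z : ℂ => 2 * exp (I * z) + exp (-2 * I * z))
      (2 * (exp (I * t) * I) + exp (-2 * I * t) * (-2 * I)) (t : ℂ) :=
    (h1.const_mul 2).add h2
  have := h.comp_ofReal
  rw [this.deriv]
  ring

theorem perpendicular_tangent_lines (θ : ℝ) :
    let γ : ℂ := exp (-2 * I * θ) + 2 * exp (I * θ)
    let γ' : ℂ := exp (-2 * I * θ) - 2 * exp (I * θ)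
    let β' : ℂ := -exp (-2 * I * θ)
    let δ : ℝ → ℂ := fun t => 2 * exp (I * t) + exp (-2 * I * t)
    δ θ = γ ∧ δ (θ + Real.pi) = γ' ∧
    ((γ - β') * conj (γ' - β')).re = 0 ∧
    ((deriv δ θ) * conj (γ - β')).im = 0 ∧
    ((deriv δ (θ + Real.pi)) * conj (γ' - β')).im = 0 := by
  intro γ γ' β' δ
  set a : ℂ := exp (I * θ) with ha
  set c : ℂ := conj a with hc
  have hce : c = exp (-(I * θ)) := by rw [hc, ha, ← Complex.exp_conj]; simp
  have hac : a * c = 1 := by rw [hce, ha, ← Complex.exp_add]; simp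
  have h2 : exp (-2 * I * (θ : ℂ)) = c ^ 2 := by
    rw [hce, sq, ← Complex.exp_add]; ring_nf
  have hπ1 : exp (I * ((θ + Real.pi : ℝ) : ℂ)) = -a := by
    push_cast
    rw [mul_add, Complex.exp_add, mul_comm I (Real.pi : ℂ), Complex.exp_pi_mul_I, ha]
    ring
  have hπ2 : exp (-2 * I * ((θ + Real.pi : ℝ) : ℂ)) = c ^ 2 := by
    push_cast
    have : -2 * I * ((θ : ℂ) + (Real.pi : ℂ)) = -2 * I * θ + (-1 : ℤ) * (2 * Real.pi * I) := by
      push_cast; ring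
    rw [this, Complex.exp_add, Complex.exp_int_mul_two_pi_mul_I, h2, mul_one]
  have hconjc : conj c = a := by rw [hc, Complex.conj_conj]
  have hd1 : deriv δ θ = 2 * I * a - 2 * I * c ^ 2 := by
    rw [show δ = fun t : ℝ => 2 * exp (I * t) + exp (-2 * I * t) from rfl, deriv_delta, ha, h2]
  have hd2 : deriv δ (θ + Real.pi) = -(2 * I) * a - 2 * I * c ^ 2 := by
    rw [show δ = fun t : ℝ => 2 * exp (I * t) + exp (-2 * I * t) from rfl, deriv_delta, hπ1, hπ2]
    ring
  refine ⟨by show _ = γ; rw [show γ = exp (-2*I*θ) + 2 * exp (I*θ) from rfl]; ring, ?_, ?_, ?_, ?_⟩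
  · show (2 * exp (I * ((θ + Real.pi : ℝ) : ℂ)) + exp (-2 * I * ((θ + Real.pi : ℝ) : ℂ))) = γ'
    rw [hπ1, hπ2, show γ' = exp (-2*I*θ) - 2 * exp (I*θ) from rfl, h2, ha]
    ring
  · show ((exp (-2*I*(θ:ℂ)) + 2*a - -exp (-2*I*(θ:ℂ))) *
      conj (exp (-2*I*(θ:ℂ)) - 2*a - -exp (-2*I*(θ:ℂ)))).re = 0
    rw [h2]
    have key : (c ^ 2 + 2*a - -(c^2)) * conj (c ^ 2 - 2*a - -(c^2)) = 4 * a^3 - 4 * conj (a^3) := by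
      simp only [map_sub, map_add, map_neg, map_pow, map_mul, map_ofNat, hconjc, hc, Complex.conj_conj]
      linear_combination (4 * a * c) * hac
    rw [key]
    simp [← map_pow]
  · show ((deriv δ θ) * conj (exp (-2*I*(θ:ℂ)) + 2*a - -exp (-2*I*(θ:ℂ)))).im = 0
    rw [h2, hd1]
    have key : (2*I*a - 2*I*c^2) * conj (c^2 + 2*a - -(c^2)) =
        I * (4 * a^3 - 4 * conj (a^3)) := by
      simp only [map_sub, map_add, map_neg, map_pow, map_mul, map_ofNat, hconjc, hc, Complex.conj_conj]
      linear_combination (-4 * I * a * c) * hac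
    rw [key]
    simp [Complex.mul_im, ← map_pow]
  · show ((deriv δ (θ + Real.pi)) * conj (exp (-2*I*(θ:ℂ)) - 2*a - -exp (-2*I*(θ:ℂ)))).im = 0
    rw [h2, hd2]
    have key : (-(2*I)*a - 2*I*c^2) * conj (c^2 - 2*a - -(c^2)) =
        I * (-4 * a^3 + 4 * conj (a^3)) := by
      simp only [map_sub, map_add, map_neg, map_pow, map_mul, map_ofNat, hconjc, hc, Complex.conj_conj]
      linear_combination (-4 * I * a * c) * hac
    rw [key]
    simp [Complex.mul_im, ← map_pow]
end

section
/- Let (z₁, z₂, z₃) be an amenable triple with z₂ ≠ z₃, let θ ∈ ℝ satisfy exp(3iθ) ≠ −1, and set z_H = z₁ + z₂ + z₃ and ε = 2·exp(iθ) − z_H. Let w be the orthogonal projection (in ℂ regarded as the Euclidean plane ℝ²) of ε onto the line through the points −z₁ + z₂ − z₃ and −z₁ − z₂ + z₃ (a sideline of the 'large triangle' with vertices z₁ − z₂ − z₃, −z₁ + z₂ − z₃, −z₁ − z₂ + z₃). Then w − exp(iθ) is a real scalar multiple of exp(iθ) + exp(−2iθ); in other words, w lies on the line through exp(iθ) and −exp(−2iθ),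 which is the tangent line L to the standard deltoid at the point exp(−2iθ) + 2·exp(iθ). -/
open Complex ComplexConjugate

/-- The Simson-line construction: the foot `w` of the perpendicular from
`ε = 2·exp(iθ) − z_H` to the sideline of the large triangle through
`−z₁ + z₂ − z₃` and `−z₁ − z₂ + z₃` lies on the tangent line `L` to the deltoid
at `exp(−2iθ) + 2·exp(iθ)`, i.e. the line through `exp(iθ)` and `−exp(−2iθ)`. -/
theorem simson_line_is_tangent (z₁ z₂ z₃ : ℂ) (θ : ℝ) (w : ℂ)
    (h₁ : ‖z₁‖ = 1) (h₂ : ‖z₂‖ = 1) (h₃ : ‖z₃‖ = 1)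
    (hprod : z₁ * z₂ * z₃ = 1) (hne : z₂ ≠ z₃)
    (hθ : exp (3 * I * θ) ≠ -1)
    -- `w` is on the line through `−z₁ + z₂ − z₃` and `−z₁ − z₂ + z₃`
    (hw_mem : ∃ t : ℝ, w = (-z₁ + z₂ - z₃) +
      (t : ℂ) * ((-z₁ - z₂ + z₃) - (-z₁ + z₂ - z₃)))
    -- the segment from `ε = 2·exp(iθ) − (z₁+z₂+z₃)` to `w` is perpendicular to that line
    (hw_perp : (((2 * exp (I * θ) - (z₁ + z₂ + z₃)) - w) *
      conj ((-z₁ - z₂ + z₃) - (-z₁ + z₂ - z₃))).re = 0) :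
    ∃ r : ℝ, w - exp (I * θ) = (r : ℂ) * (exp (I * θ) + exp (-2 * I * θ)) := by
  obtain ⟨t, hw⟩ := hw_mem
  set u : ℂ := exp (I * θ) with hu_def
  have hu : u ≠ 0 := Complex.exp_ne_zero _
  have hz₁ : z₁ ≠ 0 := by intro h; rw [h] at h₁; simp at h₁
  have hz₂ : z₂ ≠ 0 := by intro h; rw [h] at h₂; simp at h₂
  have hz₃ : z₃ ≠ 0 := by intro h; rw [h] at h₃; simp at h₃
  have hi₁ : z₁⁻¹ = z₂ * z₃ := by
    field_simp; linear_combination -hprod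
  have hi₂ : z₂⁻¹ = z₁ * z₃ := by
    field_simp; linear_combination -hprod
  have hi₃ : z₃⁻¹ = z₁ * z₂ := by
    field_simp; linear_combination -hprod
  have hc₁ : conj z₁ = z₂ * z₃ := by rw [(Complex.inv_eq_conj h₁).symm, hi₁]
  have hc₂ : conj z₂ = z₁ * z₃ := by rw [(Complex.inv_eq_conj h₂).symm, hi₂]
  have hc₃ : conj z₃ = z₁ * z₂ := by rw [(Complex.inv_eq_conj h₃).symm, hi₃]
  have hcu : conj u = u⁻¹ := by
    rw [hu_def, ← Complex.exp_conj, map_mul, conj_I, conj_ofReal, ← Complex.exp_neg]; ring_nf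
  have huu : u * u⁻¹ = 1 := mul_inv_cancel₀ hu
  have hv : exp (-2 * I * θ) = u⁻¹ * u⁻¹ := by
    rw [show (-2 : ℂ) * I * θ = -(I*θ) + -(I*θ) by ring, Complex.exp_add, Complex.exp_neg, hu_def]
  have hu3 : u ^ 3 ≠ -1 := by
    have h3 : exp (3 * I * (θ:ℂ)) = u ^ 3 := by
      rw [show (3:ℂ) * I * θ = I*θ + (I*θ + I*θ) by ring, Complex.exp_add, Complex.exp_add,
        hu_def]; ring
    rwa [h3] at hθ
  have hu31 : u ^ 3 + 1 ≠ 0 := fun h => hu3 (by linear_combination h)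
  have hd : z₃ - z₂ ≠ 0 := sub_ne_zero.mpr (Ne.symm hne)
  -- perpendicularity as a complex equation
  have hA0 : (((2 * u - (z₁ + z₂ + z₃)) - w) * conj ((-z₁ - z₂ + z₃) - (-z₁ + z₂ - z₃)))
      + conj (((2 * u - (z₁ + z₂ + z₃)) - w) * conj ((-z₁ - z₂ + z₃) - (-z₁ + z₂ - z₃))) = 0 := by
    rw [Complex.add_conj, hw_perp]; simp
  have hcw : conj w = (-(z₂*z₃) + z₁*z₃ - z₁*z₂) +
      (t : ℂ) * ((-(z₂*z₃) - z₁*z₃ + z₁*z₂) - (-(z₂*z₃) + z₁*z₃ - z₁*z₂)) := by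
    rw [hw]; simp only [map_add, map_sub, map_mul, map_neg, conj_ofReal, hc₁, hc₂, hc₃]
  have hA : ((2 * u - (z₁ + z₂ + z₃)) - w) * ((-(z₂*z₃) - z₁*z₃ + z₁*z₂) - (-(z₂*z₃) + z₁*z₃ - z₁*z₂))
      + ((2 * u⁻¹ - (z₂*z₃ + z₁*z₃ + z₁*z₂)) - conj w) * ((-z₁ - z₂ + z₃) - (-z₁ + z₂ - z₃)) = 0 := by
    have h := hA0
    simp only [map_sub, map_add, map_mul, map_neg, map_ofNat, conj_conj, hc₁, hc₂, hc₃, hcu] at h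
    linear_combination h + (2*(z₃-z₂)*(conj w - 2*u⁻¹ + z₁*z₂ + z₁*z₃ + z₂*z₃)) * hprod
  rw [hcw, hw] at hA
  -- solve for t
  have ht : (t : ℂ) * (2 * z₁ * (z₃ - z₂)) = z₁*u - z₁*z₂ + z₁*z₃ - u⁻¹ := by
    have h4 : (4:ℂ) * (z₃ - z₂) ≠ 0 := by
      simp [hd]
    apply mul_left_cancel₀ h4
    linear_combination hA
  have hww : w = u - z₁ - u⁻¹ * (z₂ * z₃) := by
    apply mul_left_cancel₀ hz₁
    rw [hw]
    linear_combination ht + u⁻¹ * hprod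
  set s : ℂ := -(u * (u * z₁^2 + 1)) / (z₁ * (u^3 + 1)) with hs_def
  have hs : conj s = s := by
    rw [hs_def]
    have hcu3 : (u⁻¹)^3 + 1 ≠ 0 := by
      intro h
      apply hu31
      have h2 := congrArg (· * u^3) h
      field_simp at h2
      linear_combination h2
    simp only [map_div₀, map_neg, map_mul, map_add, map_one, map_pow, hc₁, hcu]
    rw [div_eq_div_iff (mul_ne_zero (mul_ne_zero hz₂ hz₃) hcu3) (mul_ne_zero hz₁ hu31)]
    field_simp
    linear_combination (u*z₁ + u^4*z₁ - z₂*z₃ - u^3*z₂*z₃) * hprod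
  refine ⟨s.re, ?_⟩
  rw [hv, hww, show ((s.re : ℝ) : ℂ) = s from (Complex.conj_eq_iff_re.mp hs)]
  rw [hs_def]
  field_simp
  linear_combination (-1 : ℂ) * hprod
end

section
/- For all real numbers θ and λ, Q(2λ·exp(iθ) + exp(−2iθ)) = −16·(1 − λ²)·(λ − cos 3θ)². Consequently, Q(2λ·exp(iθ) + exp(−2iθ)) ≤ 0 if and only if |λ| ≤ 1; that is, the needle {2λ·exp(iθ) + exp(−2iθ) : −1 ≤ λ ≤ 1} lies in the closed deltoid region, while the rest of the tangent line (|λ| > 1) lies strictly outside the deltoid. -/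
/-!
On the tangent line at parameter `θ` write `u = exp (iθ)`, so that `conj u = u⁻¹`.
The point `z = 2λu + u⁻²` then has `conj z = 2λu⁻¹ + u²`, and substituting both
into `Q` is a rational identity in `u` and `λ`, whose value is
`-4 (1 - λ²) (2λ - u³ - u⁻³)²` with `u³ + u⁻³ = 2 cos 3θ`. Since `|cos 3θ| ≤ 1`,
the square vanishes only when `|λ| ≤ 1`, so the sign of `Q` is that of `λ² - 1`.
-/

open Complex ComplexConjugate
open scoped ComplexOrder

def deltoidForm {K : Type*} [CommRing K] (z w : K) : K :=
  z ^ 2 * w ^ 2 - 4 * (z ^ 3 + w ^ 3) + 18 * z * w - 27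

theorem Q_eq_deltoidForm (z : ℂ) : Q z = deltoidForm z (conj z) := rfl

theorem deltoidForm_tangent {K : Type*} [Field K] (l u : K) (hu : u ≠ 0) :
    deltoidForm (2 * l * u + u⁻¹ ^ 2) (2 * l * u⁻¹ + u ^ 2) =
      -4 * (1 - l ^ 2) * (2 * l - (u ^ 3 + u⁻¹ ^ 3)) ^ 2 := by
  unfold deltoidForm
  field_simp
  ring

theorem conj_exp_I_mul_ofReal (θ : ℝ) : conj (exp (I * θ)) = (exp (I * θ))⁻¹ := by
  rw [← exp_conj, ← exp_neg]
  simp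

theorem exp_neg_two_mul_I_mul_ofReal (θ : ℝ) :
    exp (-2 * I * θ) = (exp (I * θ))⁻¹ ^ 2 := by
  rw [← exp_neg, ← exp_nat_mul]
  ring_nf

theorem two_mul_cos_three_mul (θ : ℝ) :
    2 * (Real.cos (3 * θ) : ℂ) = exp (I * θ) ^ 3 + (exp (I * θ))⁻¹ ^ 3 := by
  rw [← exp_neg, ← exp_nat_mul, ← exp_nat_mul, ofReal_cos, Complex.cos]
  push_cast
  ring_nf

theorem neg_sixteen_mul_nonpos_iff_abs_le_one {c l : ℝ} (hc : |c| ≤ 1) :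
    -16 * (1 - l ^ 2) * (l - c) ^ 2 ≤ 0 ↔ |l| ≤ 1 := by
  constructor
  · intro h
    by_contra! hl
    have hl2 : 1 < l ^ 2 := by nlinarith [sq_abs l, abs_nonneg l]
    have hlc : 0 < (l - c) ^ 2 := by
      have : l ≠ c := fun hEq => by rw [hEq] at hl; linarith
      positivity [sub_ne_zero.mpr this]
    nlinarith [mul_pos (sub_pos.mpr hl2) hlc]
  · intro hl
    have : 0 ≤ 1 - l ^ 2 := by nlinarith [sq_abs l, abs_nonneg l]
    nlinarith [mul_nonneg this (sq_nonneg (l - c))]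

theorem needle_inside_deltoid (θ lam : ℝ) :
    Q (2 * lam * exp (I * θ) + exp (-2 * I * θ)) =
      ((-16 * (1 - lam ^ 2) * (lam - Real.cos (3 * θ)) ^ 2 : ℝ) : ℂ) ∧
    (Q (2 * lam * exp (I * θ) + exp (-2 * I * θ)) ≤ 0 ↔ |lam| ≤ 1) := by
  have hQ : Q (2 * lam * exp (I * θ) + exp (-2 * I * θ)) =
      ((-16 * (1 - lam ^ 2) * (lam - Real.cos (3 * θ)) ^ 2 : ℝ) : ℂ) := by
    have hconj : conj (2 * lam * exp (I * θ) + exp (-2 * I * θ)) =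
        2 * lam * (exp (I * θ))⁻¹ + exp (I * θ) ^ 2 := by
      simp only [exp_neg_two_mul_I_mul_ofReal, map_add, map_mul, map_pow, map_inv₀,
        conj_exp_I_mul_ofReal, conj_ofReal, map_ofNat, inv_inv]
    rw [Q_eq_deltoidForm, hconj, exp_neg_two_mul_I_mul_ofReal,
      deltoidForm_tangent _ _ (exp_ne_zero _), ← two_mul_cos_three_mul]
    push_cast
    ring
  refine ⟨hQ, ?_⟩
  rw [hQ, ← ofReal_zero, real_le_real]
  exact neg_sixteen_mul_nonpos_iff_abs_le_one (Real.abs_cos_le_one _)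
end

section
/- Let θ₁, θ₂ ∈ ℝ and set P = exp(2i(θ₁+θ₂)) + exp(−2iθ₁) + exp(−2iθ₂). Then P = 2·cos(θ₁ + 2θ₂)·exp(iθ₁) + exp(−2iθ₁) = 2·cos(2θ₁ + θ₂)·exp(iθ₂) + exp(−2iθ₂), so P lies on both tangent lines {2λ·exp(iθ₁) + exp(−2iθ₁) : λ ∈ ℝ} and {2λ·exp(iθ₂) + exp(−2iθ₂) : λ ∈ ℝ} of the standard deltoid, and Q(P) ≤ 0, i.e. P lies on the deltoid or in its interior. Moreover, if exp(2iθ₁) ≠ exp(2iθ₂) and real numbers λ₁, λ₂ satisfy 2λ₁·exp(iθ₁) + exp(−2iθ₁) = 2λ₂·exp(iθ₂) + exp(−2iθ₂), then λ₁ = cos(θ₁ + 2θ₂) and λ₂ = cos(2θ₁ + θ₂); in particular, any two tangent lines of the deltoid intersect at a point of the closed deltoid region. -/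
open Complex ComplexConjugate
open scoped ComplexOrder

set_option maxHeartbeats 2000000 in
theorem tangents_meet_in_deltoid (θ₁ θ₂ : ℝ) :
    let P : ℂ := exp (2 * I * (θ₁ + θ₂)) + exp (-2 * I * θ₁) + exp (-2 * I * θ₂)
    P = 2 * (Real.cos (θ₁ + 2 * θ₂) : ℂ) * exp (I * θ₁) + exp (-2 * I * θ₁) ∧
    P = 2 * (Real.cos (2 * θ₁ + θ₂) : ℂ) * exp (I * θ₂) + exp (-2 * I * θ₂) ∧
    Q P ≤ 0 ∧
    (exp (2 * I * θ₁) ≠ exp (2 * I * θ₂) →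
      ∀ lam₁ lam₂ : ℝ,
        2 * (lam₁ : ℂ) * exp (I * θ₁) + exp (-2 * I * θ₁) =
          2 * (lam₂ : ℂ) * exp (I * θ₂) + exp (-2 * I * θ₂) →
        lam₁ = Real.cos (θ₁ + 2 * θ₂) ∧ lam₂ = Real.cos (2 * θ₁ + θ₂)) := by
  intro P
  set A : ℂ := exp ((θ₁ : ℂ) * I) with hA
  set B : ℂ := exp ((θ₂ : ℂ) * I) with hB
  have hA0 : A ≠ 0 := Complex.exp_ne_zero _
  have hB0 : B ≠ 0 := Complex.exp_ne_zero _
  have hconjA : conj A = A⁻¹ := by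
    rw [hA, ← Complex.exp_conj, ← Complex.exp_neg]
    congr 1
    simp [Complex.conj_I]
  have hconjB : conj B = B⁻¹ := by
    rw [hB, ← Complex.exp_conj, ← Complex.exp_neg]
    congr 1
    simp [Complex.conj_I]
  have h1 : exp (2 * I * ((θ₁ : ℂ) + (θ₂ : ℂ))) = A ^ 2 * B ^ 2 := by
    rw [show 2 * I * ((θ₁ : ℂ) + (θ₂ : ℂ))
        = ((θ₁ : ℂ) * I + (θ₂ : ℂ) * I) + ((θ₁ : ℂ) * I + (θ₂ : ℂ) * I) by ring,
      Complex.exp_add, Complex.exp_add, hA, hB]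
    ring
  have h2 : exp (-2 * I * (θ₁ : ℂ)) = A⁻¹ ^ 2 := by
    rw [show -2 * I * (θ₁ : ℂ) = -((θ₁ : ℂ) * I) + -((θ₁ : ℂ) * I) by ring,
      Complex.exp_add, Complex.exp_neg, hA]
    ring
  have h3 : exp (-2 * I * (θ₂ : ℂ)) = B⁻¹ ^ 2 := by
    rw [show -2 * I * (θ₂ : ℂ) = -((θ₂ : ℂ) * I) + -((θ₂ : ℂ) * I) by ring,
      Complex.exp_add, Complex.exp_neg, hB]
    ring
  have h4 : exp (I * (θ₁ : ℂ)) = A := by rw [hA, mul_comm]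
  have h5 : exp (I * (θ₂ : ℂ)) = B := by rw [hB, mul_comm]
  have h6 : exp (2 * I * (θ₁ : ℂ)) = A ^ 2 := by
    rw [show 2 * I * (θ₁ : ℂ) = (θ₁ : ℂ) * I + (θ₁ : ℂ) * I by ring, Complex.exp_add, hA]
    ring
  have h7 : exp (2 * I * (θ₂ : ℂ)) = B ^ 2 := by
    rw [show 2 * I * (θ₂ : ℂ) = (θ₂ : ℂ) * I + (θ₂ : ℂ) * I by ring, Complex.exp_add, hB]
    ring
  have hc1 : ((Real.cos (θ₁ + 2 * θ₂) : ℝ) : ℂ) = (A * B ^ 2 + (A * B ^ 2)⁻¹) / 2 := by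
    rw [Complex.ofReal_cos, Complex.cos,
      show ((θ₁ + 2 * θ₂ : ℝ) : ℂ) * I = (θ₁ : ℂ) * I + ((θ₂ : ℂ) * I + (θ₂ : ℂ) * I) by
        push_cast; ring,
      show -(((θ₁ + 2 * θ₂ : ℝ) : ℂ)) * I
          = -((θ₁ : ℂ) * I + ((θ₂ : ℂ) * I + (θ₂ : ℂ) * I)) by push_cast; ring,
      ]
    simp only [Complex.exp_add, Complex.exp_neg]
    rw [hA, hB]
    ring
  have hc2 : ((Real.cos (2 * θ₁ + θ₂) : ℝ) : ℂ) = (A ^ 2 * B + (A ^ 2 * B)⁻¹) / 2 := by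
    rw [Complex.ofReal_cos, Complex.cos,
      show ((2 * θ₁ + θ₂ : ℝ) : ℂ) * I = ((θ₁ : ℂ) * I + (θ₁ : ℂ) * I) + (θ₂ : ℂ) * I by
        push_cast; ring,
      show -(((2 * θ₁ + θ₂ : ℝ) : ℂ)) * I
          = -(((θ₁ : ℂ) * I + (θ₁ : ℂ) * I) + (θ₂ : ℂ) * I) by push_cast; ring,
      ]
    simp only [Complex.exp_add, Complex.exp_neg]
    rw [hA, hB]
    ring
  have hc3 : ((Real.cos (4 * θ₁ + 2 * θ₂) : ℝ) : ℂ)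
      = (A ^ 4 * B ^ 2 + (A ^ 4 * B ^ 2)⁻¹) / 2 := by
    rw [Complex.ofReal_cos, Complex.cos,
      show ((4 * θ₁ + 2 * θ₂ : ℝ) : ℂ) * I
          = ((θ₁ : ℂ) * I + (θ₁ : ℂ) * I + ((θ₁ : ℂ) * I + (θ₁ : ℂ) * I))
            + ((θ₂ : ℂ) * I + (θ₂ : ℂ) * I) by push_cast; ring,
      show -(((4 * θ₁ + 2 * θ₂ : ℝ) : ℂ)) * I
          = -(((θ₁ : ℂ) * I + (θ₁ : ℂ) * I + ((θ₁ : ℂ) * I + (θ₁ : ℂ) * I))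
            + ((θ₂ : ℂ) * I + (θ₂ : ℂ) * I)) by push_cast; ring,
      ]
    simp only [Complex.exp_add, Complex.exp_neg]
    rw [hA, hB]
    ring
  have hc4 : ((Real.cos (2 * θ₁ + 4 * θ₂) : ℝ) : ℂ)
      = (A ^ 2 * B ^ 4 + (A ^ 2 * B ^ 4)⁻¹) / 2 := by
    rw [Complex.ofReal_cos, Complex.cos,
      show ((2 * θ₁ + 4 * θ₂ : ℝ) : ℂ) * I
          = ((θ₁ : ℂ) * I + (θ₁ : ℂ) * I)
            + ((θ₂ : ℂ) * I + (θ₂ : ℂ) * I + ((θ₂ : ℂ) * I + (θ₂ : ℂ) * I)) by push_cast; ring,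
      show -(((2 * θ₁ + 4 * θ₂ : ℝ) : ℂ)) * I
          = -(((θ₁ : ℂ) * I + (θ₁ : ℂ) * I)
            + ((θ₂ : ℂ) * I + (θ₂ : ℂ) * I + ((θ₂ : ℂ) * I + (θ₂ : ℂ) * I))) by
        push_cast; ring,
      ]
    simp only [Complex.exp_add, Complex.exp_neg]
    rw [hA, hB]
    ring
  have hc5 : ((Real.cos (2 * θ₁ - 2 * θ₂) : ℝ) : ℂ)
      = (A ^ 2 * B⁻¹ ^ 2 + A⁻¹ ^ 2 * B ^ 2) / 2 := by
    rw [Complex.ofReal_cos, Complex.cos,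
      show ((2 * θ₁ - 2 * θ₂ : ℝ) : ℂ) * I
          = ((θ₁ : ℂ) * I + (θ₁ : ℂ) * I) + (-((θ₂ : ℂ) * I) + -((θ₂ : ℂ) * I)) by
        push_cast; ring,
      show -(((2 * θ₁ - 2 * θ₂ : ℝ) : ℂ)) * I
          = (-((θ₁ : ℂ) * I) + -((θ₁ : ℂ) * I)) + ((θ₂ : ℂ) * I + (θ₂ : ℂ) * I) by
        push_cast; ring,
      ]
    simp only [Complex.exp_add, Complex.exp_neg]
    rw [hA, hB]
    ring
  have hPdef : P = exp (2 * I * ((θ₁ : ℂ) + (θ₂ : ℂ))) + exp (-2 * I * (θ₁ : ℂ))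
      + exp (-2 * I * (θ₂ : ℂ)) := rfl
  clear_value A B P
  have hP2 : P = A ^ 2 * B ^ 2 + A⁻¹ ^ 2 + B⁻¹ ^ 2 := by rw [hPdef, h1, h2, h3]
  have g1 : P = 2 * (Real.cos (θ₁ + 2 * θ₂) : ℂ) * exp (I * (θ₁ : ℂ)) + exp (-2 * I * (θ₁ : ℂ)) := by
    rw [hP2, h2, h4, hc1]
    field_simp
    ring
  have g2 : P = 2 * (Real.cos (2 * θ₁ + θ₂) : ℂ) * exp (I * (θ₂ : ℂ)) + exp (-2 * I * (θ₂ : ℂ)) := by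
    rw [hP2, h3, h5, hc2]
    field_simp
  have hconjP : conj P = (A ^ 2 * B ^ 2)⁻¹ + A ^ 2 + B ^ 2 := by
    rw [hP2]
    simp only [map_add, map_mul, map_pow, map_inv₀, hconjA, hconjB, inv_inv]
    ring
  have hQval : Q P = (((2 * Real.cos (4 * θ₁ + 2 * θ₂) - 2)
      * (2 * Real.cos (2 * θ₁ + 4 * θ₂) - 2) * (2 * Real.cos (2 * θ₁ - 2 * θ₂) - 2) : ℝ) : ℂ) := by
    simp only [Q]
    rw [hconjP, hP2]
    simp only [Complex.ofReal_mul, Complex.ofReal_sub, Complex.ofReal_ofNat]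
    rw [hc3, hc4, hc5]
    field_simp
    ring
  have hcle : ((2 * Real.cos (4 * θ₁ + 2 * θ₂) - 2)
      * (2 * Real.cos (2 * θ₁ + 4 * θ₂) - 2) * (2 * Real.cos (2 * θ₁ - 2 * θ₂) - 2) : ℝ) ≤ 0 := by
    have t1 : 2 * Real.cos (4 * θ₁ + 2 * θ₂) - 2 ≤ 0 := by
      nlinarith [Real.cos_le_one (4 * θ₁ + 2 * θ₂)]
    have t2 : 2 * Real.cos (2 * θ₁ + 4 * θ₂) - 2 ≤ 0 := by
      nlinarith [Real.cos_le_one (2 * θ₁ + 4 * θ₂)]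
    have t3 : 2 * Real.cos (2 * θ₁ - 2 * θ₂) - 2 ≤ 0 := by
      nlinarith [Real.cos_le_one (2 * θ₁ - 2 * θ₂)]
    have t12 : 0 ≤ (2 * Real.cos (4 * θ₁ + 2 * θ₂) - 2) * (2 * Real.cos (2 * θ₁ + 4 * θ₂) - 2) := by
      nlinarith [t1, t2]
    exact mul_nonpos_iff.mpr (Or.inl ⟨t12, t3⟩)
  refine ⟨g1, g2, ?_, ?_⟩
  · rw [hQval]
    exact_mod_cast hcle
  · intro hne lam₁ lam₂ heq
    have hne' : A ^ 2 ≠ B ^ 2 := by rw [h6, h7] at hne; exact hne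
    have hu : A * conj A = 1 := by rw [hconjA]; field_simp
    have hv : B * conj B = 1 := by rw [hconjB]; field_simp
    have h2c : exp (-2 * I * (θ₁ : ℂ)) = (conj A) ^ 2 := by rw [h2, hconjA]
    have h3c : exp (-2 * I * (θ₂ : ℂ)) = (conj B) ^ 2 := by rw [h3, hconjB]
    rw [h4, h5, h2c, h3c] at heq
    have hc1c : ((Real.cos (θ₁ + 2 * θ₂) : ℝ) : ℂ)
        = (A * B ^ 2 + conj A * (conj B) ^ 2) / 2 := by
      rw [hc1, hconjA, hconjB]; ring
    have hc2c : ((Real.cos (2 * θ₁ + θ₂) : ℝ) : ℂ)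
        = (A ^ 2 * B + (conj A) ^ 2 * conj B) / 2 := by
      rw [hc2, hconjA, hconjB]; ring
    have hμ : ((lam₁ - Real.cos (θ₁ + 2 * θ₂) : ℝ) : ℂ) * A
        = ((lam₂ - Real.cos (2 * θ₁ + θ₂) : ℝ) : ℂ) * B := by
      rw [Complex.ofReal_sub, Complex.ofReal_sub, hc1c, hc2c]
      linear_combination (1 / 2 : ℂ) * heq - ((conj B) ^ 2 / 2) * hu + ((conj A) ^ 2 / 2) * hv
    have hμc : ((lam₁ - Real.cos (θ₁ + 2 * θ₂) : ℝ) : ℂ) * conj A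
        = ((lam₂ - Real.cos (2 * θ₁ + θ₂) : ℝ) : ℂ) * conj B := by
      have h := congrArg conj hμ
      simp only [map_mul, Complex.conj_ofReal] at h
      exact h
    have hdet : A * conj B - conj A * B ≠ 0 := by
      intro h
      apply hne'
      have h' : A * conj B = conj A * B := sub_eq_zero.mp h
      linear_combination (A * B) * h' + B ^ 2 * hu - A ^ 2 * hv
    have hkey : ((lam₁ - Real.cos (θ₁ + 2 * θ₂) : ℝ) : ℂ) * (A * conj B - conj A * B) = 0 := by
      linear_combination (conj B) * hμ - B * hμc
    have hm1 : ((lam₁ - Real.cos (θ₁ + 2 * θ₂) : ℝ) : ℂ) = 0 := by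
      rcases mul_eq_zero.mp hkey with h | h
      · exact h
      · exact absurd h hdet
    have hm1' : lam₁ - Real.cos (θ₁ + 2 * θ₂) = 0 := by exact_mod_cast hm1
    have hm2 : ((lam₂ - Real.cos (2 * θ₁ + θ₂) : ℝ) : ℂ) * B = 0 := by
      rw [← hμ, hm1, zero_mul]
    have hm2' : lam₂ - Real.cos (2 * θ₁ + θ₂) = 0 := by
      rcases mul_eq_zero.mp hm2 with h | h
      · exact_mod_cast h
      · exact absurd h hB0
    constructor <;> linarith
end

section
/- Let φ₁, φ₂, φ₃ be real numbers with φ₁ + φ₂ + φ₃ = 0 and exp(iφ₂) ≠ exp(iφ₃) (so (exp(iφ₁), exp(iφ₂), exp(iφ₃)) is an amenable triple with distinct second and third vertices). Then the altitude line of the triangle through the vertex exp(iφ₁), namely {exp(iφ₁) + t·i·(exp(iφ₂) − exp(iφ₃)) : t ∈ ℝ}, is equal as a set to the tangent line {2λ·exp(−iφ₁/2) + exp(iφ₁) : λ ∈ ℝ} of the standard deltoid (the tangent line parameterized as 2λ·exp(iθ) + exp(−2iθ) with θ = −φ₁/2). In particular each altitude line of an amenable triangle is a tangent line of the deltoid.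 -/
/-!
Since `φ₁ + φ₂ + φ₃ = 0`, the angles `φ₂, φ₃` are `θ ± δ` with `θ = -φ₁/2` and
`δ = (φ₂ - φ₃)/2`, so `i(e^{iφ₂} - e^{iφ₃}) = -2 sin δ · e^{iθ}`. Both lines therefore pass
through `e^{iφ₁}` with directions that are nonzero real multiples of each other
(`sin δ ≠ 0` because the vertices `e^{iφ₂}, e^{iφ₃}` are distinct).
-/

open Complex ComplexConjugate

theorem Complex.exp_add_mul_I_sub_exp_sub_mul_I (θ δ : ℂ) :
    exp ((θ + δ) * I) - exp ((θ - δ) * I) = 2 * I * sin δ * exp (θ * I) := by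
  have h2Isin : 2 * I * sin δ = exp (δ * I) - exp (-δ * I) := by
    rw [sin]
    ring_nf
    rw [I_sq]
    ring
  rw [h2Isin, add_mul, sub_mul, exp_add, exp_sub, neg_mul, exp_neg, div_eq_mul_inv]
  ring

theorem I_mul_exp_sub_exp_of_add_add_eq_zero {φ₁ φ₂ φ₃ : ℝ} (hsum : φ₁ + φ₂ + φ₃ = 0) :
    I * (exp (I * φ₂) - exp (I * φ₃)) =
      ((-Real.sin ((φ₂ - φ₃) / 2) : ℝ) : ℂ) * (2 * exp (-I * φ₁ / 2)) := by
  have hsumC : (φ₁ : ℂ) + φ₂ + φ₃ = 0 := mod_cast hsum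
  have h₂ : I * φ₂ = (-φ₁ / 2 + ((φ₂ - φ₃) / 2 : ℝ)) * I := by
    push_cast; linear_combination (I / 2) * hsumC
  have h₃ : I * φ₃ = (-φ₁ / 2 - ((φ₂ - φ₃) / 2 : ℝ)) * I := by
    push_cast; linear_combination (I / 2) * hsumC
  rw [h₂, h₃, exp_add_mul_I_sub_exp_sub_mul_I, ofReal_neg, ofReal_sin]
  ring_nf
  rw [I_sq]
  ring

theorem setOf_exists_add_real_mul_eq_of_eq_ofReal_mul {p u w : ℂ} {c : ℝ} (hc : c ≠ 0)
    (hw : w = c * u) :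
    {z : ℂ | ∃ t : ℝ, z = p + t * w} = {z : ℂ | ∃ s : ℝ, z = p + s * u} := by
  ext z
  constructor
  · rintro ⟨t, rfl⟩
    exact ⟨t * c, by rw [hw, ofReal_mul, mul_assoc]⟩
  · rintro ⟨s, rfl⟩
    exact ⟨s / c, by rw [hw, ← mul_assoc, ← ofReal_mul, div_mul_cancel₀ s hc]⟩

/-- The altitude line through the vertex `exp(iφ₁)` of an amenable triangle equals the
tangent line of the deltoid parameterized as `2λ·exp(iθ) + exp(−2iθ)` with `θ = −φ₁/2`. -/
theorem altitude_is_tangent_line (φ₁ φ₂ φ₃ : ℝ)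
    (hsum : φ₁ + φ₂ + φ₃ = 0)
    (hne : exp (I * φ₂) ≠ exp (I * φ₃)) :
    {z : ℂ | ∃ t : ℝ, z = exp (I * φ₁) + (t : ℂ) * (I * (exp (I * φ₂) - exp (I * φ₃)))} =
      {z : ℂ | ∃ lam : ℝ, z = 2 * (lam : ℂ) * exp (-I * φ₁ / 2) + exp (I * φ₁)} := by
  have hdir := I_mul_exp_sub_exp_of_add_add_eq_zero hsum
  have hsin : -Real.sin ((φ₂ - φ₃) / 2) ≠ 0 := by
    intro h
    rw [h, ofReal_zero, zero_mul, mul_eq_zero, sub_eq_zero] at hdir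
    exact hne (hdir.resolve_left I_ne_zero)
  rw [setOf_exists_add_real_mul_eq_of_eq_ofReal_mul hsin hdir]
  ext z
  exact exists_congr fun s => by ring_nf
end

section
/- Let (z₁, z₂, z₃) be an amenable triple and set z_H = z₁ + z₂ + z₃. Then: (i) z_H is the orthocenter of the triangle with vertices z₁, z₂, z₃, i.e. Re[(z_H − z₁)·conj(z₂ − z₃)] = 0, Re[(z_H − z₂)·conj(z₃ − z₁)] = 0 and Re[(z_H − z₃)·conj(z₁ − z₂)] = 0; and (ii) Q(z_H) ≤ 0, i.e. z_H lies on the standard deltoid or in its interior. -/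
open Complex ComplexConjugate
open scoped ComplexOrder

theorem orthocenter_in_deltoid (z₁ z₂ z₃ : ℂ)
    (h₁ : ‖z₁‖ = 1) (h₂ : ‖z₂‖ = 1) (h₃ : ‖z₃‖ = 1)
    (hprod : z₁ * z₂ * z₃ = 1) :
    let zH : ℂ := z₁ + z₂ + z₃
    ((zH - z₁) * conj (z₂ - z₃)).re = 0 ∧
    ((zH - z₂) * conj (z₃ - z₁)).re = 0 ∧
    ((zH - z₃) * conj (z₁ - z₂)).re = 0 ∧
    Q zH ≤ 0 := by
  intro zH
  have m₁ : z₁ * conj z₁ = 1 := by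
    rw [Complex.mul_conj]; exact_mod_cast by rw [← Complex.sq_norm, h₁]; norm_num
  have m₂ : z₂ * conj z₂ = 1 := by
    rw [Complex.mul_conj]; exact_mod_cast by rw [← Complex.sq_norm, h₂]; norm_num
  have m₃ : z₃ * conj z₃ = 1 := by
    rw [Complex.mul_conj]; exact_mod_cast by rw [← Complex.sq_norm, h₃]; norm_num
  have hc1 : conj z₁ = z₂ * z₃ := by
    calc conj z₁ = conj z₁ * (z₁ * z₂ * z₃) := by rw [hprod]; ring
    _ = (z₁ * conj z₁) * z₂ * z₃ := by ring
    _ = z₂ * z₃ := by rw [m₁]; ring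
  have hc2 : conj z₂ = z₁ * z₃ := by
    calc conj z₂ = conj z₂ * (z₁ * z₂ * z₃) := by rw [hprod]; ring
    _ = (z₂ * conj z₂) * z₁ * z₃ := by ring
    _ = z₁ * z₃ := by rw [m₂]; ring
  have hc3 : conj z₃ = z₁ * z₂ := by
    calc conj z₃ = conj z₃ * (z₁ * z₂ * z₃) := by rw [hprod]; ring
    _ = (z₃ * conj z₃) * z₁ * z₂ := by ring
    _ = z₁ * z₂ := by rw [m₃]; ring
  have reZero : ∀ u : ℂ, u + conj u = 0 → u.re = 0 := by
    intro u hu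
    have := congrArg Complex.re hu
    simp [Complex.add_re, Complex.conj_re] at this
    linarith
  have o₁ : ((zH - z₁) * conj (z₂ - z₃)).re = 0 := by
    apply reZero
    simp only [zH, map_mul, map_sub, map_add, Complex.conj_conj]
    linear_combination 2 * m₂ - 2 * m₃
  have o₂ : ((zH - z₂) * conj (z₃ - z₁)).re = 0 := by
    apply reZero
    simp only [zH, map_mul, map_sub, map_add, Complex.conj_conj]
    linear_combination 2 * m₃ - 2 * m₁
  have o₃ : ((zH - z₃) * conj (z₁ - z₂)).re = 0 := by
    apply reZero
    simp only [zH, map_mul, map_sub, map_add, Complex.conj_conj]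
    linear_combination 2 * m₁ - 2 * m₂
  refine ⟨o₁, o₂, o₃, ?_⟩
  set d : ℂ := (z₁ - z₂) * (z₂ - z₃) * (z₃ - z₁) with hd
  have hQ : Q zH = d ^ 2 := by
    simp only [Q, zH, map_add, hc1, hc2, hc3, hd]
    linear_combination (4 * (z₁ + z₂ + z₃) ^ 3 - 18 * (z₁ + z₂ + z₃) *
      (z₁ * z₂ + z₂ * z₃ + z₃ * z₁) + 27 * (1 + z₁ * z₂ * z₃)) * hprod
  have hcd : conj d = -d := by
    simp only [hd, map_mul, map_sub, hc1, hc2, hc3]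
    linear_combination (-(z₁ - z₂) * (z₂ - z₃) * (z₃ - z₁)) * hprod
  have hd2 : d ^ 2 = -((Complex.normSq d : ℝ) : ℂ) := by
    have := Complex.mul_conj d
    rw [hcd] at this
    linear_combination -this
  rw [hQ, hd2]
  have : (0:ℝ) ≤ Complex.normSq d := Complex.normSq_nonneg d
  rw [neg_le, neg_zero]
  exact_mod_cast this
end

section
/- Let θ ∈ ℝ and λ₀ ∈ ℝ with −1 ≤ λ₀ ≤ 1, and let (z₁, z₂, z₃) be an amenable triple with z₁ + z₂ + z₃ = 2λ₀·exp(iθ) + exp(−2iθ). Then the multiset {z₁, z₂, z₃} equals the multiset {exp(−2iθ), (λ₀ + i·√(1 − λ₀²))·exp(iθ), (λ₀ − i·√(1 − λ₀²))·exp(iθ)}. -/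
open Complex ComplexConjugate

open Polynomial in
lemma cubic_roots_eq {a b c d e f : ℂ}
    (h1 : a + b + c = d + e + f)
    (h2 : a * b + a * c + b * c = d * e + d * f + e * f)
    (h3 : a * b * c = d * e * f) :
    ({a, b, c} : Multiset ℂ) = ({d, e, f} : Multiset ℂ) := by
  have expand : ∀ x y z : ℂ, (X - C x) * (X - C y) * (X - C z) =
      X ^ 3 - C (x + y + z) * X ^ 2 + C (x * y + x * z + y * z) * X - C (x * y * z) := by
    intro x y z
    simp only [C_add, C_mul]
    ring
  have hpoly : (X - C a) * (X - C b) * (X - C c) = (X - C d) * (X - C e) * (X - C f) := by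
    rw [expand, expand, h1, h2, h3]
  have pa : (Multiset.map (fun x => X - C x) ({a, b, c} : Multiset ℂ)).prod
      = (X - C a) * (X - C b) * (X - C c) := by
    simp [Multiset.prod_cons, mul_assoc]
  have pb : (Multiset.map (fun x => X - C x) ({d, e, f} : Multiset ℂ)).prod
      = (X - C d) * (X - C e) * (X - C f) := by
    simp [Multiset.prod_cons, mul_assoc]
  have := congrArg Polynomial.roots ((pa.trans hpoly).trans pb.symm)
  rwa [roots_multiset_prod_X_sub_C, roots_multiset_prod_X_sub_C] at this

/-- If the orthocenter of an amenable triangle lies on the needle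
`{2λ·exp(iθ) + exp(−2iθ) : −1 ≤ λ ≤ 1}`, say at parameter `λ₀`, then the vertex
multiset is `{exp(−2iθ), (λ₀ ± i√(1−λ₀²))·exp(iθ)}`. -/
theorem vertices_from_needle_point (θ lam₀ : ℝ) (hlam : -1 ≤ lam₀ ∧ lam₀ ≤ 1)
    (z₁ z₂ z₃ : ℂ)
    (h₁ : ‖z₁‖ = 1) (h₂ : ‖z₂‖ = 1) (h₃ : ‖z₃‖ = 1)
    (hprod : z₁ * z₂ * z₃ = 1)
    (hH : z₁ + z₂ + z₃ = 2 * (lam₀ : ℂ) * exp (I * θ) + exp (-2 * I * θ)) :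
    ({z₁, z₂, z₃} : Multiset ℂ) =
      ({exp (-2 * I * θ),
        ((lam₀ : ℂ) + (Real.sqrt (1 - lam₀ ^ 2) : ℂ) * I) * exp (I * θ),
        ((lam₀ : ℂ) - (Real.sqrt (1 - lam₀ ^ 2) : ℂ) * I) * exp (I * θ)} : Multiset ℂ) := by
  obtain ⟨hl1, hl2⟩ := hlam
  set u : ℂ := exp (I * θ) with hu
  set m : ℂ := exp (-2 * I * θ) with hmdef
  set S : ℂ := (Real.sqrt (1 - lam₀ ^ 2) : ℂ) with hS
  set L : ℂ := (lam₀ : ℂ) with hL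
  have hu0 : u ≠ 0 := Complex.exp_ne_zero _
  have hS2 : S ^ 2 = 1 - L ^ 2 := by
    have h0 : (0:ℝ) ≤ 1 - lam₀ ^ 2 := by nlinarith
    rw [hS, hL, ← Complex.ofReal_pow, Real.sq_sqrt h0]
    push_cast; ring
  have hm' : m * (u * u) = 1 := by
    rw [hmdef, hu, ← Complex.exp_add, ← Complex.exp_add,
      show -2 * I * (θ:ℂ) + (I * θ + I * θ) = 0 by ring, Complex.exp_zero]
  -- conjugates
  have habsu : ‖u‖ = 1 := by
    rw [hu, Complex.norm_exp]; simp
  have habsm : ‖m‖ = 1 := by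
    rw [hmdef, Complex.norm_exp]; simp
  have hmc : ∀ w : ℂ, ‖w‖ = 1 → w * conj w = 1 := by
    intro w hw
    rw [Complex.mul_conj]
    norm_cast
    rw [Complex.normSq_eq_norm_sq, hw]; norm_num
  have hcu : u * conj u = 1 := hmc u habsu
  have hcm' : m * conj m = 1 := hmc m habsm
  have hcm : conj m = u * u := by
    have : m * conj m = m * (u * u) := by rw [hcm', hm']
    exact mul_left_cancel₀ (Complex.exp_ne_zero _) this
  have hcumu : conj u = m * u := by
    have : u * conj u = u * (m * u) := by rw [hcu, ← hm']; ring
    exact mul_left_cancel₀ hu0 this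
  -- conj z_i = product of the other two
  have nz : ∀ w : ℂ, ‖w‖ = 1 → w * conj w = 1 := hmc
  have c1 : conj z₁ = z₂ * z₃ := by
    calc conj z₁ = conj z₁ * (z₁ * z₂ * z₃) := by rw [hprod, mul_one]
      _ = (z₁ * conj z₁) * (z₂ * z₃) := by ring
      _ = z₂ * z₃ := by rw [nz z₁ h₁, one_mul]
  have c2 : conj z₂ = z₁ * z₃ := by
    calc conj z₂ = conj z₂ * (z₁ * z₂ * z₃) := by rw [hprod, mul_one]
      _ = (z₂ * conj z₂) * (z₁ * z₃) := by ring
      _ = z₁ * z₃ := by rw [nz z₂ h₂, one_mul]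
  have c3 : conj z₃ = z₁ * z₂ := by
    calc conj z₃ = conj z₃ * (z₁ * z₂ * z₃) := by rw [hprod, mul_one]
      _ = (z₃ * conj z₃) * (z₁ * z₂) := by ring
      _ = z₁ * z₂ := by rw [nz z₃ h₃, one_mul]
  have hconj : z₁ * z₂ + z₁ * z₃ + z₂ * z₃ = conj (z₁ + z₂ + z₃) := by
    rw [map_add, map_add, c1, c2, c3]; ring
  have hcsum : conj (z₁ + z₂ + z₃) = 2 * L * (m * u) + u * u := by
    rw [hH]
    simp only [map_add, map_mul, map_ofNat, hcm, hcumu, hL, Complex.conj_ofReal]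
  have hS2I : S ^ 2 * I ^ 2 = L ^ 2 - 1 := by rw [Complex.I_sq, hS2]; ring
  apply cubic_roots_eq
  · rw [hH]; ring
  · rw [hconj, hcsum]
    linear_combination u^2 * hS2I
  · linear_combination hprod + m * u^2 * hS2I - hm'
end

section
/- Let z_H ∈ ℂ satisfy Q(z_H) ≤ 0. Then there exist complex numbers z₁, z₂, z₃ with |z₁| = |z₂| = |z₃| = 1, z₁·z₂·z₃ = 1 and z₁ + z₂ + z₃ = z_H. Equivalently, all three roots of the cubic z³ − z_H·z² + conj(z_H)·z − 1 lie on the unit circle whenever Q(z_H) ≤ 0. -/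
open Complex ComplexConjugate
open scoped ComplexOrder

private lemma key_lemma (r u v : ℂ) (hu : conj r * u = 1) (hv : r * u * v = 1)
    (hD : ((r - u) * (r - v) * (u - v)) ^ 2 ≤ 0) : ‖r‖ = 1 := by
  have hr0 : r ≠ 0 := by rintro rfl; simp at hu
  have hc0 : (conj r : ℂ) ≠ 0 := by simpa using hr0
  have hu2 : u = (conj r)⁻¹ := by field_simp; linear_combination hu
  have hv2 : v = conj r * r⁻¹ := by
    subst hu2; field_simp at hv ⊢; linear_combination hv
  set t : ℝ := (normSq r - 1) * normSq (r ^ 2 - conj r) with ht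
  have hkey : ((r - u) * (r - v) * (u - v)) ^ 2 * (conj r * r) ^ 4 = ((t : ℝ) : ℂ) ^ 2 := by
    subst hu2; subst hv2
    have hconj : conj (r ^ 2 - conj r) = (conj r) ^ 2 - r := by
      simp [map_sub, map_pow]
    push_cast [ht]
    rw [show ((normSq r : ℂ)) = r * conj r from (Complex.mul_conj r).symm,
        show ((normSq (r ^ 2 - conj r) : ℂ)) = (r ^ 2 - conj r) * ((conj r) ^ 2 - r) from by
          rw [← hconj]; exact (Complex.mul_conj _).symm]
    field_simp
    ring
  have h1 : ((r - u) * (r - v) * (u - v)) ^ 2 * ((normSq r : ℝ) : ℂ) ^ 4 = ((t:ℝ):ℂ)^2 := by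
    rw [← hkey, mul_comm (conj r) r, Complex.mul_conj]
  have h2 : (((r - u) * (r - v) * (u - v)) ^ 2).re * (normSq r) ^ 4 = t ^ 2 := by
    have := congrArg Complex.re h1
    simpa [← Complex.ofReal_pow, Complex.mul_re] using this
  rw [Complex.le_def] at hD
  have hre : (((r - u) * (r - v) * (u - v)) ^ 2).re ≤ 0 := by simpa using hD.1
  have hpos : (0:ℝ) < (normSq r) ^ 4 := pow_pos (Complex.normSq_pos.2 hr0) 4
  have h3 : t ^ 2 ≤ 0 := by nlinarith
  have h4 : t = 0 := pow_eq_zero_iff (n := 2) (by norm_num) |>.1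
    (le_antisymm h3 (sq_nonneg t))
  rcases mul_eq_zero.1 (ht ▸ h4) with h5 | h5
  · have : normSq r = 1 := by linarith [sub_eq_zero.1 h5]
    have := Complex.sq_norm r
    nlinarith [norm_nonneg r]
  · have h6 : r ^ 2 = conj r := sub_eq_zero.1 (Complex.normSq_eq_zero.1 h5)
    have h7 : ‖r‖ ^ 2 = ‖r‖ := by
      rw [← norm_pow, h6, Complex.norm_conj]
    have h8 : ‖r‖ ≠ 0 := by simpa using hr0
    have h9 : ‖r‖ * (‖r‖ - 1) = 0 := by nlinarith
    rcases mul_eq_zero.1 h9 with h | h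
    · exact absurd h h8
    · linarith [sub_eq_zero.1 h]

private lemma abs_one_of_conj_mul (a : ℂ) (ha : conj a * a = 1) : ‖a‖ = 1 := by
  have h := congrArg (‖·‖) ha
  simp only [norm_mul, Complex.norm_conj, norm_one] at h
  nlinarith [norm_nonneg a]

/-- Every point of the closed deltoid region is the orthocenter of an amenable triangle:
the three roots of `z³ − z_H·z² + conj(z_H)·z − 1` all lie on the unit circle. -/
theorem exists_amenable_triple (zH : ℂ) (h : Q zH ≤ 0) :
    ∃ z₁ z₂ z₃ : ℂ,
      ‖z₁‖ = 1 ∧ ‖z₂‖ = 1 ∧ ‖z₃‖ = 1 ∧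
      z₁ * z₂ * z₃ = 1 ∧ z₁ + z₂ + z₃ = zH := by
  obtain ⟨z1, hz1⟩ : ∃ z : ℂ, z ^ 3 - zH * z ^ 2 + conj zH * z - 1 = 0 := by
    have hdeg : (Polynomial.C (1:ℂ) * Polynomial.X ^ 3 + Polynomial.C (-zH) * Polynomial.X ^ 2
        + Polynomial.C (conj zH) * Polynomial.X + Polynomial.C (-1)).degree = 3 :=
      Polynomial.degree_cubic one_ne_zero
    obtain ⟨z, hz⟩ := Complex.exists_root
      (f := Polynomial.C (1:ℂ) * Polynomial.X ^ 3 + Polynomial.C (-zH) * Polynomial.X ^ 2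
        + Polynomial.C (conj zH) * Polynomial.X + Polynomial.C (-1)) (by rw [hdeg]; norm_num)
    refine ⟨z, ?_⟩
    simp [Polynomial.IsRoot] at hz
    linear_combination hz
  obtain ⟨d, hd⟩ := IsAlgClosed.exists_pow_nat_eq
    ((zH - z1) ^ 2 - 4 * (z1 ^ 2 - zH * z1 + conj zH)) (n := 2) two_pos
  obtain ⟨z2, z3, hsum', hprodq⟩ :
      ∃ z2 z3 : ℂ, z2 + z3 = zH - z1 ∧ z2 * z3 = z1 ^ 2 - zH * z1 + conj zH :=
    ⟨(zH - z1 + d)/2, (zH - z1 - d)/2, by ring, by linear_combination (-(1:ℂ)/4) * hd⟩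
  have hsum : z1 + z2 + z3 = zH := by linear_combination hsum'
  have hprod : z1 * z2 * z3 = 1 := by linear_combination z1 * hprodq + hz1
  have he2 : z1 * z2 + z1 * z3 + z2 * z3 = conj zH := by
    linear_combination z1 * hsum' + hprodq
  have hQ : Q zH = ((z1 - z2) * (z1 - z3) * (z2 - z3)) ^ 2 := by
    rw [Q, ← he2, ← hsum]
    linear_combination (4*(z1+z2+z3)^3
      - 18*(z1+z2+z3)*(z1*z2+z1*z3+z2*z3) + 27 + 27*(z1*z2*z3)) * hprod
  rw [hQ] at h
  have habs : ∀ a b c : ℂ, a * b * c = 1 → ‖a‖ = 1 → ‖b‖ = 1 →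
      ‖c‖ = 1 := by
    intro a b c hp ha hb
    have : ‖a‖ * ‖b‖ * ‖c‖ = 1 := by
      rw [← norm_mul, ← norm_mul, hp, norm_one]
    rw [ha, hb] at this; simpa using this
  have hfac : ∀ w : ℂ, (w - z1) * (w - z2) * (w - z3)
      = w ^ 3 - zH * w ^ 2 + conj zH * w - 1 := by
    intro w
    linear_combination (-(w^2)) * hsum + w * he2 - hprod
  have hinv : ∀ w : ℂ, w ≠ 0 → w ^ 3 - zH * w ^ 2 + conj zH * w - 1 = 0 →
      ((conj w)⁻¹ - z1) * ((conj w)⁻¹ - z2) * ((conj w)⁻¹ - z3) = 0 := by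
    intro w hw hroot
    have hcw : conj w ≠ 0 := by simpa using hw
    have hcr : (conj w) ^ 3 - conj zH * (conj w) ^ 2 + zH * conj w - 1 = 0 := by
      have := congrArg conj hroot
      simpa [map_sub, map_add, map_mul, map_pow] using this
    rw [hfac]
    field_simp
    linear_combination (-1 : ℂ) * hcr
  have hz10 : z1 ≠ 0 := by intro h0; rw [h0] at hprod; simp at hprod
  have hc1 : conj z1 ≠ 0 := by simpa using hz10
  -- z1 is a root, so (conj z1)⁻¹ is a root
  have hr1 := hinv z1 hz10 hz1
  rcases mul_eq_zero.1 hr1 with h12 | h13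
  · rcases mul_eq_zero.1 h12 with h11 | h12
    · -- (conj z1)⁻¹ = z1 : |z1| = 1
      have hA : conj z1 * z1 = 1 := by
        nth_rewrite 2 [← sub_eq_zero.1 h11]; exact mul_inv_cancel₀ hc1
      have ha1 : ‖z1‖ = 1 := abs_one_of_conj_mul z1 hA
      -- now use the inversion of z2
      have hz20 : z2 ≠ 0 := by intro h0; rw [h0] at hprod; simp at hprod
      have hc2 : conj z2 ≠ 0 := by simpa using hz20
      have hz2root : z2 ^ 3 - zH * z2 ^ 2 + conj zH * z2 - 1 = 0 := by
        rw [← hfac z2]; ring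
      have hr2 := hinv z2 hz20 hz2root
      rcases mul_eq_zero.1 hr2 with h22 | h23
      · rcases mul_eq_zero.1 h22 with h21 | h22
        · -- (conj z2)⁻¹ = z1 ⇒ z2 = z1
          have hB : conj z2 * z1 = 1 := by
            rw [← sub_eq_zero.1 h21]; exact mul_inv_cancel₀ hc2
          have : conj z2 = conj z1 := mul_right_cancel₀ hz10 (hB.trans hA.symm)
          have hz2e : z2 = z1 := by
            have := congrArg conj this; simpa using this
          have ha2 : ‖z2‖ = 1 := by rw [hz2e, ha1]
          exact ⟨z1, z2, z3, ha1, ha2, habs z1 z2 z3 hprod ha1 ha2, hprod, hsum⟩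
        · -- (conj z2)⁻¹ = z2 ⇒ |z2| = 1
          have hB : conj z2 * z2 = 1 := by
            nth_rewrite 2 [← sub_eq_zero.1 h22]; exact mul_inv_cancel₀ hc2
          have ha2 : ‖z2‖ = 1 := abs_one_of_conj_mul z2 hB
          exact ⟨z1, z2, z3, ha1, ha2, habs z1 z2 z3 hprod ha1 ha2, hprod, hsum⟩
      · -- (conj z2)⁻¹ = z3 : apply key lemma with (z2, z3, z1)
        have hB : conj z2 * z3 = 1 := by
          rw [← sub_eq_zero.1 h23]; exact mul_inv_cancel₀ hc2
        have hC : z2 * z3 * z1 = 1 := by linear_combination hprod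
        have hD' : ((z2 - z3) * (z2 - z1) * (z3 - z1)) ^ 2 ≤ 0 := by
          rw [show ((z2 - z3) * (z2 - z1) * (z3 - z1)) ^ 2
            = ((z1 - z2) * (z1 - z3) * (z2 - z3)) ^ 2 from by ring]
          exact h
        have ha2 : ‖z2‖ = 1 := key_lemma z2 z3 z1 hB hC hD'
        exact ⟨z1, z2, z3, ha1, ha2, habs z1 z2 z3 hprod ha1 ha2, hprod, hsum⟩
    · -- (conj z1)⁻¹ = z2 : key lemma with (z1, z2, z3)
      have hA : conj z1 * z2 = 1 := by
        rw [← sub_eq_zero.1 h12]; exact mul_inv_cancel₀ hc1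
      have ha1 : ‖z1‖ = 1 := key_lemma z1 z2 z3 hA hprod h
      have hn : conj z1 * z1 = 1 := by
        rw [mul_comm, Complex.mul_conj]
        norm_cast
        rw [Complex.normSq_eq_norm_sq, ha1]; norm_num
      have hz2e : z2 = z1 := mul_left_cancel₀ hc1 (hA.trans hn.symm)
      have ha2 : ‖z2‖ = 1 := by rw [hz2e, ha1]
      exact ⟨z1, z2, z3, ha1, ha2, habs z1 z2 z3 hprod ha1 ha2, hprod, hsum⟩
  · -- (conj z1)⁻¹ = z3 : key lemma with (z1, z3, z2)
    have hA : conj z1 * z3 = 1 := by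
      rw [← sub_eq_zero.1 h13]; exact mul_inv_cancel₀ hc1
    have hC : z1 * z3 * z2 = 1 := by linear_combination hprod
    have hD' : ((z1 - z3) * (z1 - z2) * (z3 - z2)) ^ 2 ≤ 0 := by
      rw [show ((z1 - z3) * (z1 - z2) * (z3 - z2)) ^ 2
        = ((z1 - z2) * (z1 - z3) * (z2 - z3)) ^ 2 from by ring]
      exact h
    have ha1 : ‖z1‖ = 1 := key_lemma z1 z3 z2 hA hC hD'
    have hn : conj z1 * z1 = 1 := by
      rw [mul_comm, Complex.mul_conj]
      norm_cast
      rw [Complex.normSq_eq_norm_sq, ha1]; norm_num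
    have hz3e : z3 = z1 := mul_left_cancel₀ hc1 (hA.trans hn.symm)
    have ha3 : ‖z3‖ = 1 := by rw [hz3e, ha1]
    have ha2 : ‖z2‖ = 1 := by
      have hp' : z1 * z3 * z2 = 1 := by linear_combination hprod
      exact habs z1 z3 z2 hp' ha1 ha3
    exact ⟨z1, z2, z3, ha1, ha2, ha3, hprod, hsum⟩
end

section
/- Let (z₁, z₂, z₃) and (w₁, w₂, w₃) be triples of complex numbers with |z₁| = |z₂| = |z₃| = 1, z₁·z₂·z₃ = 1, |w₁| = |w₂| = |w₃| = 1, w₁·w₂·w₃ = 1, and z₁ + z₂ + z₃ = w₁ + w₂ + w₃. Then the multisets {z₁, z₂, z₃} and {w₁, w₂, w₃} are equal. (Thus the amenable triangle is uniquely determined, up to ordering of vertices, by its orthocenter.) -/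
open Complex ComplexConjugate Polynomial

lemma e2_eq (z₁ z₂ z₃ : ℂ)
    (h₁ : ‖z₁‖ = 1) (h₂ : ‖z₂‖ = 1) (h₃ : ‖z₃‖ = 1)
    (hp : z₁ * z₂ * z₃ = 1) :
    z₁ * z₂ + z₁ * z₃ + z₂ * z₃ = conj (z₁ + z₂ + z₃) := by
  have n₁ : z₁ ≠ 0 := by intro h; simp [h] at h₁
  have n₂ : z₂ ≠ 0 := by intro h; simp [h] at h₂
  have n₃ : z₃ ≠ 0 := by intro h; simp [h] at h₃
  have c₁ : conj z₁ = z₁⁻¹ := (Complex.inv_eq_conj h₁).symm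
  have c₂ : conj z₂ = z₂⁻¹ := (Complex.inv_eq_conj h₂).symm
  have c₃ : conj z₃ = z₃⁻¹ := (Complex.inv_eq_conj h₃).symm
  simp only [map_add, c₁, c₂, c₃]
  field_simp
  linear_combination (z₂ * z₃ + z₁ * z₃ + z₁ * z₂) * hp

/-- An amenable triangle is uniquely determined, up to ordering of its vertices,
by its orthocenter `z₁ + z₂ + z₃`. -/
theorem amenable_triple_unique (z₁ z₂ z₃ w₁ w₂ w₃ : ℂ)
    (hz₁ : ‖z₁‖ = 1) (hz₂ : ‖z₂‖ = 1) (hz₃ : ‖z₃‖ = 1)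
    (hzprod : z₁ * z₂ * z₃ = 1)
    (hw₁ : ‖w₁‖ = 1) (hw₂ : ‖w₂‖ = 1) (hw₃ : ‖w₃‖ = 1)
    (hwprod : w₁ * w₂ * w₃ = 1)
    (hsum : z₁ + z₂ + z₃ = w₁ + w₂ + w₃) :
    ({z₁, z₂, z₃} : Multiset ℂ) = ({w₁, w₂, w₃} : Multiset ℂ) := by
  have he2 : z₁ * z₂ + z₁ * z₃ + z₂ * z₃ = w₁ * w₂ + w₁ * w₃ + w₂ * w₃ := by
    rw [e2_eq z₁ z₂ z₃ hz₁ hz₂ hz₃ hzprod, e2_eq w₁ w₂ w₃ hw₁ hw₂ hw₃ hwprod, hsum]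
  have h1 := congrArg (Polynomial.C : ℂ →+* ℂ[X]) hsum
  have h2 := congrArg (Polynomial.C : ℂ →+* ℂ[X]) he2
  have h3 := congrArg (Polynomial.C : ℂ →+* ℂ[X]) (hzprod.trans hwprod.symm)
  simp only [map_add, map_mul] at h1 h2 h3
  have hpoly : (X - C z₁) * (X - C z₂) * (X - C z₃) =
      (X - C w₁) * (X - C w₂) * (X - C w₃) := by
    linear_combination (-(X ^ 2)) * h1 + X * h2 - h3
  calc ({z₁, z₂, z₃} : Multiset ℂ)
      = (({z₁, z₂, z₃} : Multiset ℂ).map fun a => X - C a).prod.roots := by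
        rw [Polynomial.roots_multiset_prod_X_sub_C]
    _ = (({w₁, w₂, w₃} : Multiset ℂ).map fun a => X - C a).prod.roots := by
        simp only [Multiset.insert_eq_cons, Multiset.map_cons, Multiset.map_singleton,
          Multiset.prod_cons, Multiset.prod_singleton]
        rw [← mul_assoc, ← mul_assoc, hpoly]
    _ = ({w₁, w₂, w₃} : Multiset ℂ) := Polynomial.roots_multiset_prod_X_sub_C _
end

section
/- For every amenable triple (z₁, z₂, z₃) and every natural number n, p n (z₁ + z₂ + z₃) = z₁ⁿ + z₂ⁿ + z₃ⁿ. (In particular, the n-th power sum z₁ⁿ + z₂ⁿ + z₃ⁿ depends only on the orthocenter z₁ + z₂ + z₃, and the map p_n sending the orthocenter of an amenable triangle to the orthocenter of the amenable triangle with vertices z₁ⁿ, z₂ⁿ, z₃ⁿ is given by this universal formula.) -/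
open Complex ComplexConjugate

/-- `p 0 z = 3`, `p 1 z = z`, `p 2 z = z² − 2·conj z`, and
`p n z = z·p (n−1) z − conj z·p (n−2) z + p (n−3) z` for `n ≥ 3`. -/
noncomputable def p : ℕ → ℂ → ℂ
  | 0, _ => 3
  | 1, z => z
  | 2, z => z ^ 2 - 2 * conj z
  | (n + 3), z => z * p (n + 2) z - conj z * p (n + 1) z + p n z

/-- For an amenable triple, `p n` sends the orthocenter `z₁ + z₂ + z₃` to the
orthocenter `z₁ⁿ + z₂ⁿ + z₃ⁿ` of the triangle of `n`-th powers. -/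
theorem p_apply_orthocenter (z₁ z₂ z₃ : ℂ)
    (h₁ : ‖z₁‖ = 1) (h₂ : ‖z₂‖ = 1) (h₃ : ‖z₃‖ = 1)
    (hprod : z₁ * z₂ * z₃ = 1) (n : ℕ) :
    p n (z₁ + z₂ + z₃) = z₁ ^ n + z₂ ^ n + z₃ ^ n := by
  have c₁ : conj z₁ = z₂ * z₃ := by
    have : z₁ * conj z₁ = 1 := by
      rw [Complex.mul_conj]; norm_cast
      simp [← Complex.sq_norm, h₁]
    have hz₁ : z₁ ≠ 0 := by
      intro h; rw [h] at h₁; simp at h₁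
    apply mul_left_cancel₀ hz₁
    rw [this]; linear_combination -hprod
  have c₂ : conj z₂ = z₁ * z₃ := by
    have : z₂ * conj z₂ = 1 := by
      rw [Complex.mul_conj]; norm_cast
      simp [← Complex.sq_norm, h₂]
    have hz₂ : z₂ ≠ 0 := by
      intro h; rw [h] at h₂; simp at h₂
    apply mul_left_cancel₀ hz₂
    rw [this]; linear_combination -hprod
  have c₃ : conj z₃ = z₁ * z₂ := by
    have : z₃ * conj z₃ = 1 := by
      rw [Complex.mul_conj]; norm_cast
      simp [← Complex.sq_norm, h₃]
    have hz₃ : z₃ ≠ 0 := by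
      intro h; rw [h] at h₃; simp at h₃
    apply mul_left_cancel₀ hz₃
    rw [this]; linear_combination -hprod
  have cs : conj (z₁ + z₂ + z₃) = z₁ * z₂ + z₂ * z₃ + z₁ * z₃ := by
    rw [map_add, map_add, c₁, c₂, c₃]; ring
  induction n using Nat.strong_induction_on with
  | _ n ih =>
    match n with
    | 0 => norm_num [p]
    | 1 => simp [p]
    | 2 => rw [p, cs]; ring
    | (m + 3) =>
      rw [p, cs, ih (m+2) (by omega), ih (m+1) (by omega), ih m (by omega)]
      have e1 : z₁ ^ (m+3) = (z₁+z₂+z₃) * z₁^(m+2) - (z₁*z₂+z₂*z₃+z₁*z₃) * z₁^(m+1) + z₁^m := by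
        have : z₁^(m+3) = z₁^m * z₁^3 := by ring
        rw [this]
        have h3 : z₁^3 = (z₁+z₂+z₃) * z₁^2 - (z₁*z₂+z₂*z₃+z₁*z₃) * z₁ + 1 := by
          linear_combination hprod
        rw [h3]; ring
      have e2 : z₂ ^ (m+3) = (z₁+z₂+z₃) * z₂^(m+2) - (z₁*z₂+z₂*z₃+z₁*z₃) * z₂^(m+1) + z₂^m := by
        have : z₂^(m+3) = z₂^m * z₂^3 := by ring
        rw [this]
        have h3 : z₂^3 = (z₁+z₂+z₃) * z₂^2 - (z₁*z₂+z₂*z₃+z₁*z₃) * z₂ + 1 := by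
          linear_combination hprod
        rw [h3]; ring
      have e3 : z₃ ^ (m+3) = (z₁+z₂+z₃) * z₃^(m+2) - (z₁*z₂+z₂*z₃+z₁*z₃) * z₃^(m+1) + z₃^m := by
        have : z₃^(m+3) = z₃^m * z₃^3 := by ring
        rw [this]
        have h3 : z₃^3 = (z₁+z₂+z₃) * z₃^2 - (z₁*z₂+z₂*z₃+z₁*z₃) * z₃ + 1 := by
          linear_combination hprod
        rw [h3]; ring
      rw [e1, e2, e3]; ring
end

section
/- For every integer n ≥ 1 and every z ∈ ℂ, p n z = n · Σ (z^α · (−conj(z))^β · (α+β+γ−1)! / (α!·β!·γ!)), where the sum ranges over all triples (α, β, γ) of natural numbers satisfying α + 2β + 3γ = n. -/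
open Complex ComplexConjugate

/-!
`p n z` is the `n`-th power sum of the roots of `T³ − z T² + conj z T − 1` (the recursion is
Newton's identity), and the formula is Waring's; we prove it for `x = z`, `y = −conj z`, `w = 1`
in any field of characteristic zero. For `n ≥ 4` both sides satisfy
`P n = x P (n−1) + y P (n−2) + w P (n−3)`: multiplying by `x`, `y` or `w` shifts the exponent
triple `(α, β, γ)` by a unit vector, so after dividing out `(s − 2)! / (α! β! γ!)`, with
`s = α + β + γ`, comparing coefficients of `x^α y^β w^γ` leaves
`n (s − 1) = (n − 1) α + (n − 2) β + (n − 3) γ`, which is `α + 2β + 3γ = n`.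
-/

open Finset
open scoped Nat

namespace Waring

def weight (t : ℕ × ℕ × ℕ) : ℕ := t.1 + 2 * t.2.1 + 3 * t.2.2

def triplesOfWeight (n : ℕ) : Finset (ℕ × ℕ × ℕ) :=
  (range (n + 1) ×ˢ range (n + 1) ×ˢ range (n + 1)).filter (fun t => weight t = n)

@[simp]
lemma mem_triplesOfWeight {n : ℕ} {t : ℕ × ℕ × ℕ} : t ∈ triplesOfWeight n ↔ weight t = n := by
  obtain ⟨a, b, g⟩ := t
  simp only [triplesOfWeight, mem_filter, mem_product, mem_range, and_iff_right_iff_imp]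
  simp only [weight]
  omega

lemma weight_add (s t : ℕ × ℕ × ℕ) : weight (s + t) = weight s + weight t := by
  simp only [weight, Prod.fst_add, Prod.snd_add]
  ring

lemma sum_triplesOfWeight_eq_add_weight {M : Type*} [AddCommMonoid M] (m : ℕ)
    (e : ℕ × ℕ × ℕ) (f : ℕ × ℕ × ℕ → M) :
    ∑ t ∈ triplesOfWeight m, f t =
      ∑ t ∈ triplesOfWeight (m + weight e), if e ≤ t then f (t - e) else 0 := by
  rw [← sum_filter]
  refine sum_nbij' (· + e) (· - e) (fun t ht => ?_) (fun t ht => ?_) (fun t _ => ?_)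
    (fun t ht => ?_) (fun t _ => by simp only [add_tsub_cancel_right])
  · simp_all [weight_add]
  · simp only [mem_filter, mem_triplesOfWeight] at ht ⊢
    rw [← tsub_add_cancel_of_le ht.2, weight_add] at ht
    omega
  · exact add_tsub_cancel_right t e
  · exact tsub_add_cancel_of_le (mem_filter.mp ht).2

variable {F : Type*} [Field F]

variable (F) in
def coeff (t : ℕ × ℕ × ℕ) : F :=
  ((t.1 + t.2.1 + t.2.2 - 1)! : F) / (t.1 ! * t.2.1 ! * t.2.2 !)

def monomial (x y w : F) (t : ℕ × ℕ × ℕ) : F := x ^ t.1 * y ^ t.2.1 * w ^ t.2.2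

lemma monomial_add (x y w : F) (s t : ℕ × ℕ × ℕ) :
    monomial x y w (s + t) = monomial x y w s * monomial x y w t := by
  simp only [monomial, Prod.fst_add, Prod.snd_add, pow_add]
  ring

noncomputable def powerSum (x y w : F) (n : ℕ) : F :=
  n * ∑ t ∈ triplesOfWeight n, coeff F t * monomial x y w t

lemma monomial_mul_sum (x y w : F) (f : ℕ × ℕ × ℕ → F) {m k : ℕ} {e : ℕ × ℕ × ℕ}
    (hk : m + weight e = k) :
    monomial x y w e * ∑ t ∈ triplesOfWeight m, f t * monomial x y w t =
      ∑ t ∈ triplesOfWeight k, (if e ≤ t then f (t - e) else 0) * monomial x y w t := by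
  rw [mul_sum, sum_triplesOfWeight_eq_add_weight m e, hk]
  refine sum_congr rfl fun t _ => ?_
  split_ifs with he
  · rw [mul_left_comm, ← monomial_add, add_tsub_cancel_of_le he]
  · rw [zero_mul]

variable [CharZero F]

lemma coeff_eq_mul {a b g : ℕ} (h : 2 ≤ a + b + g) :
    coeff F (a, b, g) = (a + b + g - 1 : ℕ) * ((a + b + g - 2)! / (a ! * b ! * g ! : F)) := by
  rw [coeff, show a + b + g - 1 = a + b + g - 2 + 1 by omega, Nat.factorial_succ]
  push_cast
  ring

lemma ite_coeff_sub_fst {a b g : ℕ} (h : 2 ≤ a + b + g) :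
    (if (1, 0, 0) ≤ (a, b, g) then coeff F ((a, b, g) - (1, 0, 0)) else 0) =
      a * ((a + b + g - 2)! / (a ! * b ! * g ! : F)) := by
  split_ifs with ha
  · simp only [Prod.mk_le_mk] at ha
    rw [coeff, Prod.mk_sub_mk, Prod.mk_sub_mk,
      show a - 1 + (b - 0) + (g - 0) - 1 = a + b + g - 2 by omega,
      ← Nat.mul_factorial_pred (by omega : a ≠ 0)]
    simp only [tsub_zero]
    push_cast
    have : (a : F) ≠ 0 := by exact_mod_cast (by omega : a ≠ 0)
    field_simp
  · simp_all

lemma ite_coeff_sub_snd {a b g : ℕ} (h : 2 ≤ a + b + g) :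
    (if (0, 1, 0) ≤ (a, b, g) then coeff F ((a, b, g) - (0, 1, 0)) else 0) =
      b * ((a + b + g - 2)! / (a ! * b ! * g ! : F)) := by
  split_ifs with hb
  · simp only [Prod.mk_le_mk] at hb
    rw [coeff, Prod.mk_sub_mk, Prod.mk_sub_mk,
      show a - 0 + (b - 1) + (g - 0) - 1 = a + b + g - 2 by omega,
      ← Nat.mul_factorial_pred (by omega : b ≠ 0)]
    simp only [tsub_zero]
    push_cast
    have : (b : F) ≠ 0 := by exact_mod_cast (by omega : b ≠ 0)
    field_simp
  · simp_all

lemma ite_coeff_sub_thd {a b g : ℕ} (h : 2 ≤ a + b + g) :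
    (if (0, 0, 1) ≤ (a, b, g) then coeff F ((a, b, g) - (0, 0, 1)) else 0) =
      g * ((a + b + g - 2)! / (a ! * b ! * g ! : F)) := by
  split_ifs with hg
  · simp only [Prod.mk_le_mk] at hg
    rw [coeff, Prod.mk_sub_mk, Prod.mk_sub_mk,
      show a - 0 + (b - 0) + (g - 1) - 1 = a + b + g - 2 by omega,
      ← Nat.mul_factorial_pred (by omega : g ≠ 0)]
    simp only [tsub_zero]
    push_cast
    have : (g : F) ≠ 0 := by exact_mod_cast (by omega : g ≠ 0)
    field_simp
  · simp_all

lemma add_four_mul_coeff {n : ℕ} {t : ℕ × ℕ × ℕ} (ht : weight t = n + 4) :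
    ((n + 4 : ℕ) : F) * coeff F t =
      ((n + 3 : ℕ) : F) * (if (1, 0, 0) ≤ t then coeff F (t - (1, 0, 0)) else 0) +
      ((n + 2 : ℕ) : F) * (if (0, 1, 0) ≤ t then coeff F (t - (0, 1, 0)) else 0) +
      ((n + 1 : ℕ) : F) * (if (0, 0, 1) ≤ t then coeff F (t - (0, 0, 1)) else 0) := by
  obtain ⟨a, b, g⟩ := t
  simp only [weight] at ht
  have hs : 2 ≤ a + b + g := by omega
  rw [coeff_eq_mul hs, ite_coeff_sub_fst hs, ite_coeff_sub_snd hs, ite_coeff_sub_thd hs,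
    Nat.cast_sub (by omega)]
  have hw : (a + 2 * b + 3 * g : F) = n + 4 := by exact_mod_cast ht
  push_cast
  linear_combination ((a + b + g - 2)! / (a ! * b ! * g ! : F)) * hw

lemma powerSum_add_four (x y w : F) (n : ℕ) :
    powerSum x y w (n + 4) =
      x * powerSum x y w (n + 3) + y * powerSum x y w (n + 2) + w * powerSum x y w (n + 1) := by
  have shift (k : ℕ) (e : ℕ × ℕ × ℕ) (he : k + weight e = n + 4) :
      monomial x y w e * powerSum x y w k = ∑ t ∈ triplesOfWeight (n + 4),
        (if e ≤ t then (k : F) * coeff F (t - e) else 0) * monomial x y w t := by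
    rw [powerSum, mul_sum, ← monomial_mul_sum x y w (fun u => (k : F) * coeff F u) he]
    simp only [mul_assoc]
  have hx := shift (n + 3) (1, 0, 0) rfl
  have hy := shift (n + 2) (0, 1, 0) rfl
  have hw := shift (n + 1) (0, 0, 1) rfl
  rw [show monomial x y w (1, 0, 0) = x by simp [monomial]] at hx
  rw [show monomial x y w (0, 1, 0) = y by simp [monomial]] at hy
  rw [show monomial x y w (0, 0, 1) = w by simp [monomial]] at hw
  rw [hx, hy, hw, ← sum_add_distrib, ← sum_add_distrib, powerSum, mul_sum]
  refine sum_congr rfl fun t ht => ?_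
  rw [← mul_assoc, add_four_mul_coeff (mem_triplesOfWeight.mp ht)]
  simp only [mul_ite, mul_zero, add_mul]

lemma powerSum_one (x y w : F) : powerSum x y w 1 = x := by
  rw [powerSum, show triplesOfWeight 1 = {(1, 0, 0)} by decide]
  norm_num [coeff, monomial]

lemma powerSum_two (x y w : F) : powerSum x y w 2 = x ^ 2 + 2 * y := by
  rw [powerSum, show triplesOfWeight 2 = {(2, 0, 0), (0, 1, 0)} by decide]
  norm_num [coeff, monomial]
  ring

lemma powerSum_three (x y w : F) : powerSum x y w 3 = x ^ 3 + 3 * x * y + 3 * w := by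
  rw [powerSum, show triplesOfWeight 3 = {(3, 0, 0), (1, 1, 0), (0, 0, 1)} by decide]
  norm_num [coeff, monomial]
  ring

end Waring

open Waring

lemma p_eq_powerSum (z : ℂ) : ∀ n, 1 ≤ n → p n z = powerSum z (-conj z) 1 n
  | 1, _ => (powerSum_one _ _ _).symm
  | 2, _ => by rw [powerSum_two]; simp only [p]; ring
  | 3, _ => by rw [powerSum_three]; simp only [p]; ring
  | n + 4, _ => by
    rw [powerSum_add_four, ← p_eq_powerSum z (n + 3) (by omega),
      ← p_eq_powerSum z (n + 2) (by omega), ← p_eq_powerSum z (n + 1) (by omega)]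
    simp only [p]
    ring

/-- Explicit summation formula: for `n ≥ 1`,
`p n z = n · Σ_{α+2β+3γ=n} ((α+β+γ−1)!/(α!·β!·γ!)) · z^α · (−conj z)^β`. -/
theorem p_sum_formula (n : ℕ) (hn : 1 ≤ n) (z : ℂ) :
    p n z = (n : ℂ) *
      ∑ t ∈ (Finset.range (n + 1) ×ˢ Finset.range (n + 1) ×ˢ Finset.range (n + 1)).filter
          (fun t => t.1 + 2 * t.2.1 + 3 * t.2.2 = n),
        (((t.1 + t.2.1 + t.2.2 - 1).factorial : ℂ) /
            ((t.1.factorial : ℂ) * (t.2.1.factorial : ℂ) * (t.2.2.factorial : ℂ))) *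
          z ^ t.1 * (-(conj z)) ^ t.2.1 := by
  rw [p_eq_powerSum z n hn, powerSum]
  congr 1
  refine sum_congr rfl fun t _ => ?_
  rw [coeff, monomial, one_pow, mul_one, ← mul_assoc]
end

section
/- Let ω = exp(2πi/3). For every natural number n and every z ∈ ℂ, p n (ω·z) = ωⁿ · p n z, and likewise p n (conj(ω)·z) = conj(ω)ⁿ · p n z. -/
open Complex ComplexConjugate

/-! A cube root of unity `w` has `conj w = w⁻¹ = w ^ 2`, so substituting `w * z` multiplies
`z` by `w` and `conj z` by `w ^ 2`; hence every term of the recurrence for `p (n + 3)` picks up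
the factor `w ^ (n + 3)` (using `w ^ 3 = 1` for the last one), and induction gives
`p n (w * z) = w ^ n * p n z`. -/

lemma Complex.conj_eq_sq_of_pow_three_eq_one {w : ℂ} (hw : w ^ 3 = 1) : conj w = w ^ 2 := by
  rw [← inv_eq_conj (norm_eq_one_of_pow_eq_one hw three_ne_zero), inv_eq_of_mul_eq_one_right]
  rw [← pow_succ', hw]

lemma p_mul_of_pow_three_eq_one {w : ℂ} (hw : w ^ 3 = 1) :
    ∀ n z, p n (w * z) = w ^ n * p n z
  | 0, z => by simp [p]
  | 1, z => by simp [p]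
  | 2, z => by
      simp only [p, map_mul, conj_eq_sq_of_pow_three_eq_one hw]
      ring
  | n + 3, z => by
      simp only [p, map_mul, conj_eq_sq_of_pow_three_eq_one hw,
        p_mul_of_pow_three_eq_one hw (n + 2) z, p_mul_of_pow_three_eq_one hw (n + 1) z,
        p_mul_of_pow_three_eq_one hw n z]
      linear_combination (-(w ^ n * p n z)) * hw

lemma exp_two_pi_I_div_three_pow_three : exp (2 * Real.pi * I / 3) ^ 3 = 1 := by
  simpa using (isPrimitiveRoot_exp 3 three_ne_zero).pow_eq_one

/-- Equivariance of `p n` under rotation by the cube roots of unity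
`ω = exp(2πi/3)` and `conj ω`. -/
theorem p_rotation (n : ℕ) (z : ℂ) :
    let ω : ℂ := exp (2 * Real.pi * I / 3)
    p n (ω * z) = ω ^ n * p n z ∧
    p n (conj ω * z) = (conj ω) ^ n * p n z := by
  intro ω
  have hω : ω ^ 3 = 1 := exp_two_pi_I_div_three_pow_three
  have hω' : conj ω ^ 3 = 1 := by rw [← map_pow, hω, map_one]
  exact ⟨p_mul_of_pow_three_eq_one hω n z, p_mul_of_pow_three_eq_one hω' n z⟩
end

section
/- Let B be a real number, let w ∈ ℂ with |w| = 1, and let n be a natural number. Then Q(B·conj(w)ⁿ + w^(2n)) = (B − 2)·(B + 2)·(w^(3n) + conj(w)^(3n) − B)². -/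
open Complex ComplexConjugate

/-- For real `B` and `|w| = 1` (so `conj w = w⁻¹`),
`Q(B·w⁻ⁿ + w²ⁿ) = (B − 2)(B + 2)(w³ⁿ + w⁻³ⁿ − B)²`. -/
theorem Q_of_special_point (B : ℝ) (w : ℂ) (hw : ‖w‖ = 1) (n : ℕ) :
    Q ((B : ℂ) * (conj w) ^ n + w ^ (2 * n)) =
      ((B : ℂ) - 2) * ((B : ℂ) + 2) * (w ^ (3 * n) + (conj w) ^ (3 * n) - (B : ℂ)) ^ 2 := by
  have hw0 : w ≠ 0 := by
    intro h; simp [h] at hw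
  have hc : conj w = w⁻¹ := (Complex.inv_eq_conj hw).symm
  have h2 : w ^ (2 * n) = (w ^ n) ^ 2 := by rw [mul_comm, pow_mul]
  have h3 : w ^ (3 * n) = (w ^ n) ^ 3 := by rw [mul_comm, pow_mul]
  simp only [Q, map_add, map_mul, map_pow, conj_conj, conj_ofReal]
  rw [hc]
  simp only [inv_pow, inv_inv, h2, h3]
  generalize hU : w ^ n = u
  have hu0 : u ≠ 0 := hU ▸ pow_ne_zero _ hw0
  field_simp
  have key : u ^ 18 * u⁻¹ ^ 18 = 1 := by
    rw [← mul_pow, mul_inv_cancel₀ hu0, one_pow]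
  ring
end

section
/- Let A be a real number, let w ∈ ℂ with |w| = 1, and let n ≥ 1 be an integer. Then p n (w² + A·conj(w)) = q n · conj(w)ⁿ + w^(2n), where (q n) is the real sequence determined by A via q 0 = 2, q 1 = A, q (n+1) = A·q n − q (n−1). -/
open Complex ComplexConjugate

/-- The real sequence `q 0 = 2`, `q 1 = A`, `q (n+1) = A·q n − q (n−1)`
(equal to `(−i)ⁿ·Lₙ(iA)` in terms of Lucas polynomials). -/
def q (A : ℝ) : ℕ → ℝ
  | 0 => 2
  | 1 => A
  | (n + 2) => A * q A (n + 1) - q A n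

lemma p_on_tangent_line_key (A : ℝ) (w : ℂ) (hw : w * conj w = 1) :
    ∀ n, p n (w ^ 2 + (A : ℂ) * conj w) = (q A n : ℂ) * (conj w) ^ n + w ^ (2 * n) := by
  intro n
  induction n using Nat.strong_induction_on with
  | _ n ih =>
    match n with
    | 0 => simp [p, q]; norm_num
    | 1 => simp [p, q]; ring
    | 2 =>
      show (w ^ 2 + (A : ℂ) * conj w) ^ 2 - 2 * conj (w ^ 2 + (A : ℂ) * conj w) = _
      simp only [map_add, map_mul, map_pow, conj_conj, conj_ofReal, q]
      push_cast
      linear_combination (2*(A:ℂ)*w) * hw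
    | (m + 3) =>
      have h2 := ih (m + 2) (by omega)
      have h1 := ih (m + 1) (by omega)
      have h0 := ih m (by omega)
      show (w ^ 2 + (A : ℂ) * conj w) * p (m + 2) _ - conj (w ^ 2 + (A : ℂ) * conj w) * p (m + 1) _ + p m _ = _
      rw [h2, h1, h0]
      simp only [map_add, map_mul, map_pow, conj_conj, conj_ofReal, q]
      push_cast
      linear_combination ((A:ℂ) * (q A (m+1) : ℂ) * w * (conj w)^(m+1)
        - (q A m : ℂ) * (conj w)^m * (w * conj w + 1)
        + (A:ℂ) * w^(2*m+3) - w^(2*m) * (w * conj w + 1)) * hw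

/-- For real `A` and `|w| = 1`, `p n (w² + A·w⁻¹) = q n · w⁻ⁿ + w²ⁿ`. -/
theorem p_on_tangent_line (A : ℝ) (w : ℂ) (hw : ‖w‖ = 1)
    (n : ℕ) (hn : 1 ≤ n) :
    p n (w ^ 2 + (A : ℂ) * conj w) = (q A n : ℂ) * (conj w) ^ n + w ^ (2 * n) := by
  have h : w * conj w = 1 := by
    rw [Complex.mul_conj]
    norm_cast
    simp [Complex.normSq_eq_norm_sq, hw]
  exact p_on_tangent_line_key A w h n
end

section
/- Let A be a real number, let w ∈ ℂ with |w| = 1, and let n ≥ 1 be an integer. Then Q(p n (w² + A·conj(w))) = (A² − 4)·(g n)²·(w^(3n) + conj(w)^(3n) − q n)², where (q n) and (g n) are the sequences determined by A via q 0 = 2, q 1 = A, q (n+1) = A·q n − q (n−1) and g 0 = 0, g 1 = 1, g (n+1) = A·g n − g (n−1). In particular Q(p n (w² + A·conj(w))) = 0 whenever A = ±2 or g n = 0. -/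
open Complex ComplexConjugate

/-- `g 0 = 0`, `g 1 = 1`, `g (n+1) = A·g n − g (n−1)`. -/
def g (A : ℝ) : ℕ → ℝ
  | 0 => 0
  | 1 => 1
  | (n + 2) => A * g A (n + 1) - g A n

lemma qg_key (A : ℝ) : ∀ n : ℕ,
    (q A n ^ 2 - 4 = (A ^ 2 - 4) * g A n ^ 2) ∧
    (q A (n+1) ^ 2 - 4 = (A ^ 2 - 4) * g A (n+1) ^ 2) ∧
    (q A n * q A (n+1) - 2 * A = (A ^ 2 - 4) * (g A n * g A (n+1))) := by
  intro n
  induction n with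
  | zero => exact ⟨by norm_num [q, g], by norm_num [q, g], by norm_num [q, g]⟩
  | succ n ih =>
    obtain ⟨h1, h1b, h2⟩ := ih
    have hq : q A (n + 2) = A * q A (n + 1) - q A n := rfl
    have hg : g A (n + 2) = A * g A (n + 1) - g A n := rfl
    refine ⟨h1b, ?_, ?_⟩
    · rw [hq, hg]; linear_combination A^2 * h1b - 2*A*h2 + h1
    · rw [hq, hg]; linear_combination A * h1b - h2

lemma p_formula (A : ℝ) (w : ℂ) (hc : w * conj w = 1) : ∀ m : ℕ,
    p m (w ^ 2 + (A : ℂ) * conj w) = w ^ (2 * m) + ((q A m : ℝ) : ℂ) * (conj w) ^ m := by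
  have hconj : conj (w ^ 2 + (A : ℂ) * conj w) = (conj w) ^ 2 + (A : ℂ) * w := by
    simp [map_add, map_mul, map_pow]
  have key : ∀ m : ℕ,
      (p m (w ^ 2 + (A : ℂ) * conj w) = w ^ (2 * m) + ((q A m : ℝ) : ℂ) * (conj w) ^ m) ∧
      (p (m+1) (w ^ 2 + (A : ℂ) * conj w) = w ^ (2 * (m+1)) + ((q A (m+1) : ℝ) : ℂ) * (conj w) ^ (m+1)) ∧
      (p (m+2) (w ^ 2 + (A : ℂ) * conj w) = w ^ (2 * (m+2)) + ((q A (m+2) : ℝ) : ℂ) * (conj w) ^ (m+2)) := by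
    intro m
    induction m with
    | zero =>
      refine ⟨by norm_num [p, q], by norm_num [p, q], ?_⟩
      show (w ^ 2 + (A : ℂ) * conj w) ^ 2 - 2 * conj (w ^ 2 + (A : ℂ) * conj w) = _
      rw [hconj]
      have hq2 : ((q A 2 : ℝ) : ℂ) = (A : ℂ) * (A : ℂ) - 2 := by
        have : q A 2 = A * A - 2 := by norm_num [q]
        rw [this]; push_cast; ring
      rw [hq2]
      linear_combination (2 * (A : ℂ) * w) * hc
    | succ m ih =>
      obtain ⟨h0, h1, h2⟩ := ih
      refine ⟨h1, h2, ?_⟩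
      show (w ^ 2 + (A : ℂ) * conj w) * p (m + 2) _ - conj (w ^ 2 + (A : ℂ) * conj w) * p (m + 1) _ + p m _ = _
      rw [hconj, h0, h1, h2]
      have hq3 : ((q A (m + 3) : ℝ) : ℂ) = (A : ℂ) * ((q A (m+2) : ℝ) : ℂ) - ((q A (m+1) : ℝ) : ℂ) := by
        have : q A (m + 3) = A * q A (m+2) - q A (m+1) := rfl
        rw [this]; push_cast; ring
      have hq2 : ((q A (m + 2) : ℝ) : ℂ) = (A : ℂ) * ((q A (m+1) : ℝ) : ℂ) - ((q A m : ℝ) : ℂ) := by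
        have : q A (m + 2) = A * q A (m+1) - q A m := rfl
        rw [this]; push_cast; ring
      rw [hq3]
      linear_combination ((conj w)^m * ((q A (m+2) : ℝ) : ℂ) - (conj w)^m * (A:ℂ) * ((q A (m+1) : ℝ) : ℂ)
        - (w^m)^2 + w * conj w * (conj w)^m * ((q A (m+2) : ℝ) : ℂ) - w * conj w * (w^m)^2
        + w^3 * (w^m)^2 * (A:ℂ)) * hc + (conj w)^m * hq2
  exact fun m => (key m).1

lemma Q_identity (W C qc gc A' : ℂ) (hWC : W * C = 1) (hW : conj W = C) (hC : conj C = W)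
    (hq : conj qc = qc) (hqg : qc ^ 2 - 4 = (A' ^ 2 - 4) * gc ^ 2) :
    Q (W ^ 2 + qc * C) = (A' ^ 2 - 4) * gc ^ 2 * (W ^ 3 + C ^ 3 - qc) ^ 2 := by
  have hz : conj (W ^ 2 + qc * C) = C ^ 2 + qc * W := by
    rw [map_add, map_mul, map_pow, hW, hC, hq]
  rw [Q, hz]
  linear_combination (27 - 4*qc^2 + qc^4 - 10*C^3*qc + 2*C^3*qc^3 + 27*W*C - 22*W*C*qc^2
    + W*C*qc^4 + 2*W*C^4*qc + 9*W^2*C^2 + 2*W^2*C^2*qc^2 - 10*W^3*qc + 2*W^3*qc^3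
    + W^3*C^3 + 2*W^4*C*qc) * hWC + (W^3 + C^3 - qc)^2 * hqg

/-- `Q(p n (w² + A·w⁻¹)) = (A² − 4)·gₙ²·(w³ⁿ + w⁻³ⁿ − qₙ)²`; in particular it
vanishes when `A = ±2` or `gₙ = 0`. -/
theorem Q_of_p_on_tangent_line (A : ℝ) (w : ℂ) (hw : ‖w‖ = 1)
    (n : ℕ) (hn : 1 ≤ n) :
    Q (p n (w ^ 2 + (A : ℂ) * conj w)) =
      ((A : ℂ) ^ 2 - 4) * ((g A n : ℝ) : ℂ) ^ 2 *
        (w ^ (3 * n) + (conj w) ^ (3 * n) - ((q A n : ℝ) : ℂ)) ^ 2 ∧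
    ((A = 2 ∨ A = -2 ∨ g A n = 0) → Q (p n (w ^ 2 + (A : ℂ) * conj w)) = 0) := by
  have hc : w * conj w = 1 := by
    rw [Complex.mul_conj, Complex.normSq_eq_norm_sq, hw]; norm_num
  have hWC : (w ^ n) * ((conj w) ^ n) = 1 := by rw [← mul_pow, hc, one_pow]
  have hqg : ((q A n : ℝ) : ℂ) ^ 2 - 4 = ((A : ℂ) ^ 2 - 4) * ((g A n : ℝ) : ℂ) ^ 2 := by
    have h := congrArg (fun x : ℝ => (x : ℂ)) (qg_key A n).1
    push_cast at h
    linear_combination h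
  have hmain : Q (p n (w ^ 2 + (A : ℂ) * conj w)) =
      ((A : ℂ) ^ 2 - 4) * ((g A n : ℝ) : ℂ) ^ 2 *
        (w ^ (3 * n) + (conj w) ^ (3 * n) - ((q A n : ℝ) : ℂ)) ^ 2 := by
    rw [p_formula A w hc n]
    have e1 : w ^ (2 * n) = (w ^ n) ^ 2 := by rw [← pow_mul, mul_comm]
    have e2 : w ^ (3 * n) = (w ^ n) ^ 3 := by rw [← pow_mul, mul_comm]
    have e3 : (conj w) ^ (3 * n) = ((conj w) ^ n) ^ 3 := by rw [← pow_mul, mul_comm]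
    rw [e1, e2, e3]
    exact Q_identity (w ^ n) ((conj w) ^ n) _ _ _ hWC
      (by rw [map_pow]) (by rw [map_pow, Complex.conj_conj]) (Complex.conj_ofReal _) hqg
  refine ⟨hmain, fun h => ?_⟩
  rw [hmain]
  rcases h with h | h | h <;> rw [h] <;> push_cast <;> ring
end

section
/- Fix an integer n ≥ 1 and a real number A such that either n is even and A = 2·sin(jπ/n) for some integer j with 0 ≤ j ≤ (n−2)/2, or n is odd and A = 2·sin((2j+1)π/(2n)) for some integer j with 0 ≤ j ≤ (n−3)/2. Then for every real θ, Q(p n (A·exp(iθ) + exp(−2iθ))) = 0; that is, every point of the curve parameterized by A·exp(iθ) + exp(−2iθ) is mapped by p_n onto the standard deltoid. (For A = 1 this curve is a trifolium.) -/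
/-!
For unimodular `u, v` the point `z = u + v + ū v̄` is the trace of `diag (u, v, ū v̄) ∈ SU(3)`,
and `p n z = uⁿ + vⁿ + ūⁿ v̄ⁿ` is the trace of its `n`-th power. The deltoid `Q = 0` contains
the traces `2U + Ū²` of the elements of `SU(3)` with a repeated eigenvalue `U`, so `p n z` lies
on it as soon as `uⁿ = vⁿ`. Writing `A = 2 cos ψ`, the curve point `A e^{iθ} + e^{-2iθ}` is `z` for
`u = e^{i(θ+ψ)}`, `v = e^{i(θ-ψ)}`, and `uⁿ = vⁿ` means `nψ ∈ πℤ`, which the admissible values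
of `A` provide.
-/

open Complex ComplexConjugate

lemma p_add_add_conj_mul_conj {u v : ℂ} (hu : u * conj u = 1) (hv : v * conj v = 1) (n : ℕ) :
    p n (u + v + conj u * conj v) = u ^ n + v ^ n + (conj u * conj v) ^ n := by
  have hconj : conj (u + v + conj u * conj v) = conj u + conj v + u * v := by simp
  -- `u`, `v`, `ū v̄` are the roots of `X³ - z X² + z̄ X - 1`, so their power sums obey the
  -- recurrence defining `p`.
  induction n using Nat.strong_induction_on with
  | _ n ih =>
    match n with
    | 0 => norm_num [p]
    | 1 => simp [p]
    | 2 =>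
      rw [p, hconj]
      linear_combination (2 * conj v) * hu + (2 * conj u) * hv
    | k + 3 =>
      rw [p, hconj, ih k (by omega), ih (k + 1) (by omega), ih (k + 2) (by omega)]
      linear_combination
        (u ^ k * (conj v * u - 1) +
          (conj u) ^ k * (conj v) ^ k * (conj u * (conj v) ^ 2 - conj v * v)) * hu +
        (v ^ k * (conj u * v - 1) +
          (conj u) ^ k * (conj v) ^ k * ((conj u) ^ 2 * conj v - 1)) * hv

lemma Q_two_mul_add_conj_sq {U : ℂ} (hU : U * conj U = 1) : Q (2 * U + conj U ^ 2) = 0 := by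
  have hconj : conj (2 * U + conj U ^ 2) = 2 * conj U + U ^ 2 := by
    rw [map_add, map_mul, map_pow, map_ofNat, conj_conj]
  rw [Q, hconj]
  linear_combination ((U * conj U) ^ 3 + 17 * (U * conj U) ^ 2 - 45 * (U * conj U) + 27
    + 4 * (U ^ 3 + conj U ^ 3) * (U * conj U - 1)) * hU

lemma Q_p_add_add_conj_mul_conj {u v : ℂ} (hu : u * conj u = 1) (hv : v * conj v = 1) {n : ℕ}
    (huv : u ^ n = v ^ n) : Q (p n (u + v + conj u * conj v)) = 0 := by
  have hun : u ^ n * conj (u ^ n) = 1 := by rw [map_pow, ← mul_pow, hu, one_pow]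
  convert Q_two_mul_add_conj_sq hun using 2
  rw [p_add_add_conj_mul_conj hu hv, ← huv, mul_pow, ← map_pow, ← map_pow, ← huv]
  ring

lemma conj_exp_ofReal_mul_I (x : ℝ) : conj (exp (x * I)) = exp (-x * I) := by
  rw [← exp_conj, map_mul, conj_ofReal, conj_I, neg_mul, mul_neg]

lemma exp_ofReal_mul_I_mul_conj (x : ℝ) : exp (x * I) * conj (exp (x * I)) = 1 := by
  rw [mul_conj', norm_exp_ofReal_mul_I, ofReal_one, one_pow]

lemma two_cos_mul_exp_add_exp_eq (θ ψ : ℝ) :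
    ((2 * Real.cos ψ : ℝ) : ℂ) * exp (I * θ) + exp (-2 * I * θ) =
      exp ((θ + ψ : ℝ) * I) + exp ((θ - ψ : ℝ) * I) +
        conj (exp ((θ + ψ : ℝ) * I)) * conj (exp ((θ - ψ : ℝ) * I)) := by
  rw [conj_exp_ofReal_mul_I, conj_exp_ofReal_mul_I, ← exp_add, ofReal_mul, ofReal_ofNat,
    ofReal_cos, two_cos]
  push_cast
  rw [show (θ + ψ : ℂ) * I = ψ * I + I * θ by ring, show (θ - ψ : ℂ) * I = -ψ * I + I * θ by ring,
    show -(θ + ψ : ℂ) * I + -(θ - ψ) * I = -2 * I * θ by ring, exp_add, exp_add]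
  ring

lemma exp_add_mul_I_pow_eq_exp_sub_mul_I_pow {θ ψ : ℝ} {n : ℕ} {k : ℤ}
    (hk : n * ψ = k * Real.pi) :
    exp ((θ + ψ : ℝ) * I) ^ n = exp ((θ - ψ : ℝ) * I) ^ n := by
  have hsplit : (n : ℂ) * ((θ + ψ : ℝ) * I) = n * ((θ - ψ : ℝ) * I) + k * (2 * Real.pi * I) := by
    have := congrArg (fun x : ℝ => (x : ℂ) * I) hk
    push_cast at this ⊢
    linear_combination 2 * this
  rw [← exp_nat_mul, ← exp_nat_mul, hsplit, exp_add, exp_int_mul_two_pi_mul_I, mul_one]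

lemma exists_nat_mul_sub_pi_div_two_eq_int_mul_pi_of_even {n : ℕ} (hn : n ≠ 0) (hev : Even n)
    (j : ℕ) :
    ∃ k : ℤ, n * (j * Real.pi / n - Real.pi / 2) = k * Real.pi := by
  obtain ⟨m, rfl⟩ := hev
  refine ⟨j - m, ?_⟩
  field_simp
  push_cast
  ring

lemma exists_nat_mul_sub_pi_div_two_eq_int_mul_pi_of_odd {n : ℕ} (hodd : Odd n) (j : ℕ) :
    ∃ k : ℤ, n * ((2 * j + 1) * Real.pi / (2 * n) - Real.pi / 2) = k * Real.pi := by
  obtain ⟨m, rfl⟩ := hodd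
  refine ⟨j - m, ?_⟩
  field_simp
  push_cast
  ring

/-- If `n` is even and `A = 2·sin(jπ/n)` with `0 ≤ j ≤ (n−2)/2`, or `n` is odd and
`A = 2·sin((2j+1)π/(2n))` with `0 ≤ j ≤ (n−3)/2`, then the curve
`A·exp(iθ) + exp(−2iθ)` is mapped by `p n` onto the standard deltoid. -/
theorem curves_mapped_to_deltoid (n : ℕ) (hn : 1 ≤ n) (A : ℝ)
    (hA : (Even n ∧ ∃ j : ℕ, 2 * j + 2 ≤ n ∧ A = 2 * Real.sin (j * Real.pi / n)) ∨
          (Odd n ∧ ∃ j : ℕ, 2 * j + 3 ≤ n ∧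
            A = 2 * Real.sin ((2 * j + 1) * Real.pi / (2 * n)))) :
    ∀ θ : ℝ, Q (p n ((A : ℂ) * exp (I * θ) + exp (-2 * I * θ))) = 0 := by
  obtain ⟨ψ, rfl, k, hk⟩ : ∃ ψ : ℝ, A = 2 * Real.cos ψ ∧ ∃ k : ℤ, n * ψ = k * Real.pi := by
    rcases hA with ⟨hev, j, -, rfl⟩ | ⟨hodd, j, -, rfl⟩
    · exact ⟨_, by rw [Real.cos_sub_pi_div_two],
        exists_nat_mul_sub_pi_div_two_eq_int_mul_pi_of_even (by omega) hev j⟩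
    · exact ⟨_, by rw [Real.cos_sub_pi_div_two],
        exists_nat_mul_sub_pi_div_two_eq_int_mul_pi_of_odd hodd j⟩
  intro θ
  rw [two_cos_mul_exp_add_exp_eq]
  exact Q_p_add_add_conj_mul_conj (exp_ofReal_mul_I_mul_conj _) (exp_ofReal_mul_I_mul_conj _)
    (exp_add_mul_I_pow_eq_exp_sub_mul_I_pow hk)
end

section
/- Fix an integer n ≥ 1. Then the solution set {z ∈ ℂ : p n z = 0} is finite with exactly n² elements, and it equals the set of all points exp(2πi·j₁/(3n)) + exp(2πi·j₂/(3n)) + exp(2πi·j₃/(3n)), where j₁, j₂, j₃ range over {0, 1, …, 3n−1} subject to j₁ ≢ j₂ (mod 3) and 3n ∣ (j₁ + j₂ + j₃). (These are exactly the orthocenters of the amenable triangles whose vertices, raised to the n-th power, give the equilateral triangle {1, exp(2πi/3), exp(−2πi/3)}.) -/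
open Complex ComplexConjugate

lemma p_eq (α β γ : ℂ) (h3 : α*β*γ = 1) (h2 : α*β + β*γ + γ*α = conj (α+β+γ)) :
    ∀ n, p n (α+β+γ) = α^n + β^n + γ^n := by
  have key : ∀ n, p n (α+β+γ) = α^n+β^n+γ^n ∧ p (n+1) (α+β+γ) = α^(n+1)+β^(n+1)+γ^(n+1)
      ∧ p (n+2) (α+β+γ) = α^(n+2)+β^(n+2)+γ^(n+2) := by
    intro n
    induction n with
    | zero =>
      refine ⟨?_, ?_, ?_⟩
      · simp [p]; ring
      · simp [p]
      · show (α+β+γ)^2 - 2 * conj (α+β+γ) = _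
        rw [← h2]; ring
    | succ k ih =>
      refine ⟨ih.2.1, ih.2.2, ?_⟩
      show p (k+3) (α+β+γ) = _
      simp only [p]
      rw [ih.1, ih.2.1, ih.2.2, ← h2]
      linear_combination (-(α^k + β^k + γ^k)) * h3
  exact fun n => (key n).1

open Polynomial in
lemma cubic_factor (z : ℂ) : ∃ α β γ : ℂ, α+β+γ = z ∧ α*β + β*γ + γ*α = conj z ∧ α*β*γ = 1 ∧
    ∀ t : ℂ, t^3 - z*t^2 + conj z * t - 1 = (t-α)*(t-β)*(t-γ) := by
  obtain ⟨α, hα⟩ := Complex.exists_root (f := C 1 * X^3 + C (-z) * X^2 + C (conj z) * X + C (-1))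
    (by rw [Polynomial.degree_cubic one_ne_zero]; norm_num)
  have hroot : α^3 - z*α^2 + conj z * α - 1 = 0 := by
    have h := hα
    simp [Polynomial.IsRoot] at h
    linear_combination h
  obtain ⟨w, hw⟩ := IsAlgClosed.exists_pow_nat_eq (k := ℂ)
    ((α - z)^2 - 4*(α^2 - z*α + conj z)) (n := 2) (by norm_num)
  refine ⟨α, ((z - α) + w)/2, ((z - α) - w)/2, by ring, ?_, ?_, ?_⟩
  · linear_combination (-1/4 : ℂ) * hw
  · linear_combination (-α/4) * hw + hroot
  · intro t
    linear_combination hroot + ((t-α)/4) * hw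

lemma root_inv (z α β γ x : ℂ)
    (hfac : ∀ t : ℂ, t^3 - z*t^2 + conj z * t - 1 = (t-α)*(t-β)*(t-γ))
    (h3 : α*β*γ = 1) (hx : x = α ∨ x = β ∨ x = γ) :
    (conj x)⁻¹ = α ∨ (conj x)⁻¹ = β ∨ (conj x)⁻¹ = γ := by
  have hne : x ≠ 0 := by
    rintro rfl
    rcases hx with h | h | h <;> (rw [← h] at h3; simp at h3)
  have hcx : conj x ≠ 0 := by simpa using hne
  have hPx : x^3 - z*x^2 + conj z * x - 1 = 0 := by
    rw [hfac x]
    rcases hx with h | h | h <;> rw [h] <;> ring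
  have hPcx : (conj x)^3 - conj z * (conj x)^2 + z * (conj x) - 1 = 0 := by
    have := congrArg (conj) hPx
    simpa [map_sub, map_add, map_mul, map_pow] using this
  have hPu : ((conj x)⁻¹)^3 - z*((conj x)⁻¹)^2 + conj z * ((conj x)⁻¹) - 1 = 0 := by
    field_simp
    linear_combination -hPcx
  have := hfac ((conj x)⁻¹)
  rw [hPu] at this
  have h0 := this.symm
  rcases mul_eq_zero.mp h0 with h | h
  · rcases mul_eq_zero.mp h with h | h
    · exact Or.inl (sub_eq_zero.mp h)
    · exact Or.inr (Or.inl (sub_eq_zero.mp h))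
  · exact Or.inr (Or.inr (sub_eq_zero.mp h))

lemma expand_aux (w : ℂ) (hw : w ≠ 0) :
    -(w + (conj w)⁻¹) * -((conj w) + w⁻¹)
      = ((Complex.normSq w : ℝ) : ℂ) + 2 + (((Complex.normSq w : ℝ) : ℂ))⁻¹ := by
  have hcw : conj w ≠ 0 := by simpa using hw
  rw [← Complex.mul_conj]
  field_simp
  ring

lemma pair_contra (n : ℕ) (α β γ : ℂ) (h3 : α*β*γ = 1)
    (hβ : β = (conj α)⁻¹) (hs : α^n + β^n + γ^n = 0) : False := by
  have hα0 : α ≠ 0 := by rintro rfl; simp at h3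
  have hwne : α^n ≠ 0 := pow_ne_zero _ hα0
  have hcw : conj (α^n) ≠ 0 := by simpa using hwne
  have hβn : β^n = (conj (α^n))⁻¹ := by rw [hβ, inv_pow, ← map_pow]
  have habγ : ‖γ‖ = 1 := by
    have h1 : ‖α‖ * ‖β‖ * ‖γ‖ = 1 := by
      rw [← norm_mul, ← norm_mul, h3, norm_one]
    have h2 : ‖β‖ = (‖α‖)⁻¹ := by
      rw [hβ, norm_inv, Complex.norm_conj]
    rw [h2, mul_inv_cancel₀ (norm_ne_zero_iff.mpr hα0), one_mul] at h1
    exact h1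
  have hγconj : γ^n * conj (γ^n) = 1 := by
    rw [Complex.mul_conj]
    have : ‖γ^n‖ = 1 := by rw [norm_pow, habγ, one_pow]
    rw [Complex.normSq_eq_norm_sq, this]
    norm_num
  set N := Complex.normSq (α^n) with hNdef
  have hNpos : 0 < N := Complex.normSq_pos.mpr hwne
  have hw : α^n * conj (α^n) = (N:ℂ) := Complex.mul_conj _
  have hNne : (N:ℂ) ≠ 0 := by
    exact_mod_cast hNpos.ne'
  have e1 : γ^n = -(α^n + β^n) := by linear_combination hs
  have e2 : conj (γ^n) = -(conj (α^n) + (α^n)⁻¹) := by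
    rw [e1, hβn, map_neg, map_add, map_inv₀, Complex.conj_conj]
  have expand := expand_aux (α^n) hwne
  have main : (1:ℂ) = (N:ℂ) + 2 + ((N:ℂ))⁻¹ := by
    rw [← hγconj, e1, hβn, map_neg, map_add, map_inv₀, Complex.conj_conj]
    exact expand
  have mainR : (1:ℝ) = N + 2 + N⁻¹ := by
    have := main
    push_cast at this
    exact_mod_cast this
  have hinv : 0 < N⁻¹ := inv_pos.mpr hNpos
  linarith

lemma abs_one_of (n : ℕ) (z α β γ : ℂ)
    (hfac : ∀ t : ℂ, t^3 - z*t^2 + conj z * t - 1 = (t-α)*(t-β)*(t-γ))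
    (h3 : α*β*γ = 1) (hs : α^n + β^n + γ^n = 0) : ‖α‖ = 1 := by
  have hα0 : α ≠ 0 := by rintro rfl; simp at h3
  rcases root_inv z α β γ α hfac h3 (Or.inl rfl) with h | h | h
  · have hc : conj α ≠ 0 := by simpa using hα0
    have h1 : α * conj α = 1 := by
      field_simp at h
      linear_combination -h
    rw [Complex.mul_conj] at h1
    have h2 : Complex.normSq α = 1 := by exact_mod_cast h1
    have h3' : ‖α‖ ^ 2 = 1 := by rw [Complex.sq_norm]; exact h2
    have h4 : (‖α‖ - 1) * (‖α‖ + 1) = 0 := by nlinarith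
    rcases mul_eq_zero.mp h4 with h5 | h5
    · linarith
    · have := norm_nonneg α; linarith
  · exact absurd hs (fun hs => pair_contra n α β γ h3 h.symm hs)
  · exact absurd hs (fun hs => pair_contra n α γ β (by linear_combination h3) h.symm
      (by linear_combination hs))

lemma unimod_conj_sum (α β γ : ℂ) (hu : ‖α‖ = 1) (hv : ‖β‖ = 1)
    (hw : ‖γ‖ = 1) (hprod : α * β * γ = 1) :
    α*β + β*γ + γ*α = conj (α+β+γ) := by
  have h0 : ∀ x : ℂ, ‖x‖ = 1 → x ≠ 0 := by
    intro x hx h; rw [h] at hx; simp at hx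
  have hconj : ∀ x : ℂ, ‖x‖ = 1 → x⁻¹ = conj x := by
    intro x hx
    exact Complex.inv_eq_conj hx
  have hu0 := h0 α hu
  have hv0 := h0 β hv
  have hw0 := h0 γ hw
  have h1 : α*β = conj γ := by
    rw [← hconj γ hw]; field_simp; linear_combination hprod
  have h2 : β*γ = conj α := by
    rw [← hconj α hu]; field_simp; linear_combination hprod
  have h3 : γ*α = conj β := by
    rw [← hconj β hv]; field_simp; linear_combination hprod
  rw [h1, h2, h3, ← map_add, ← map_add]
  rw [show γ + α + β = α + β + γ by ring]

lemma cube_pow (u v w : ℂ) (hu : ‖u‖ = 1) (hv : ‖v‖ = 1)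
    (hw : ‖w‖ = 1) (hsum : u + v + w = 0) (hprod : u * v * w = 1) :
    u^3 = 1 := by
  have he2 := unimod_conj_sum u v w hu hv hw hprod
  rw [hsum, map_zero] at he2
  linear_combination (u^2) * hsum - u * he2 + hprod

lemma cube_ne (u v w : ℂ) (hu : ‖u‖ = 1) (hw : ‖w‖ = 1)
    (hsum : u + v + w = 0) (huv : u = v) : False := by
  have : w = -2*u := by linear_combination hsum + huv
  rw [this] at hw
  rw [norm_mul] at hw
  simp [Complex.norm_two] at hw
  rw [hu] at hw
  norm_num at hw

lemma omega_sum (ω : ℂ) (h3 : ω^3 = 1) (hne : ω ≠ 1) (r1 r2 r3 : ℕ)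
    (b1 : r1 < 3) (b2 : r2 < 3) (b3 : r3 < 3)
    (d12 : r1 ≠ r2) (d13 : r1 ≠ r3) (d23 : r2 ≠ r3) :
    ω^r1 + ω^r2 + ω^r3 = 0 := by
  have hsum3 : (1:ℂ) + ω + ω^2 = 0 := by
    have h' : (ω - 1) * (1 + ω + ω^2) = 0 := by linear_combination h3
    rcases mul_eq_zero.mp h' with h | h
    · exact absurd (sub_eq_zero.mp h) hne
    · exact h
  interval_cases r1 <;> interval_cases r2 <;> interval_cases r3 <;> simp_all <;>
    linear_combination hsum3

lemma comp_facts (M m : ℕ) (hM : 0 < M) (h3M : 3 ∣ M) (h3 : m % 3 ≠ 0) :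
    (M - m % M) < M ∧ M ∣ m + (M - m % M) ∧ (M - m % M) % 3 = (3 - m % 3) % 3 := by
  have hr : m % M < M := Nat.mod_lt _ hM
  have hmm : m % M % 3 = m % 3 := Nat.mod_mod_of_dvd m h3M
  have hrne : m % M ≠ 0 := by intro h; rw [h] at hmm; omega
  refine ⟨by omega, ⟨m / M + 1, ?_⟩, by omega⟩
  have hdm := Nat.div_add_mod m M
  set P := M * (m / M) with hP
  have hmul : M * (m / M + 1) = P + M := by rw [hP]; ring
  omega

lemma unique_mod (M s u v : ℕ) (hu : u < M) (hv : v < M)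
    (h1 : M ∣ s + u) (h2 : M ∣ s + v) : u = v := by
  have hM : 0 < M := by omega
  have h1' : s + u ≡ 0 [MOD M] := (Nat.modEq_zero_iff_dvd).mpr h1
  have h2' : s + v ≡ 0 [MOD M] := (Nat.modEq_zero_iff_dvd).mpr h2
  have h3' : u ≡ v [MOD M] := Nat.ModEq.add_left_cancel' s (h1'.trans h2'.symm)
  have := h3'
  unfold Nat.ModEq at this
  rw [Nat.mod_eq_of_lt hu, Nat.mod_eq_of_lt hv] at this
  exact this

lemma canon (n x y w : ℕ) (hn : 1 ≤ n) (hw : w < 3*n)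
    (hx3 : x % 3 = 0) (hy3 : y % 3 = 1) (hx : x < 3*n) (hy : y < 3*n)
    (hdvd : 3*n ∣ x + y + w) :
    ∃ a b, a < n ∧ b < n ∧ x = 3*a ∧ y = 3*b + 1 ∧ w = 3*n - (3*a + 3*b + 1) % (3*n) := by
  refine ⟨x/3, y/3, by omega, by omega, by omega, by omega, ?_⟩
  have hxy : 3*(x/3) + 3*(y/3) + 1 = x + y := by omega
  rw [hxy]
  obtain ⟨hlt, hdvd2, _⟩ := comp_facts (3*n) (x+y) (by omega) ⟨n, rfl⟩ (by omega)
  exact unique_mod (3*n) (x+y) w _ hw hlt hdvd hdvd2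

lemma triple_mem (α β γ α' β' γ' : ℂ)
    (ha : ‖α‖ = 1) (hb : ‖β‖ = 1) (hc : ‖γ‖ = 1)
    (ha' : ‖α'‖ = 1) (hb' : ‖β'‖ = 1) (hc' : ‖γ'‖ = 1)
    (hp : α*β*γ = 1) (hp' : α'*β'*γ' = 1)
    (hsum : α+β+γ = α'+β'+γ') :
    (α' = α ∨ α' = β ∨ α' = γ) ∧ (β' = α ∨ β' = β ∨ β' = γ) := by
  have he2 := unimod_conj_sum α β γ ha hb hc hp
  have he2' := unimod_conj_sum α' β' γ' ha' hb' hc' hp'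
  have hfac : ∀ t : ℂ, (t-α)*(t-β)*(t-γ) = (t-α')*(t-β')*(t-γ') := by
    intro t
    have l1 : (t-α)*(t-β)*(t-γ) = t^3 - (α+β+γ)*t^2 + conj (α+β+γ) * t - 1 := by
      rw [← he2, ← hp]; ring
    have l2 : (t-α')*(t-β')*(t-γ') = t^3 - (α'+β'+γ')*t^2 + conj (α'+β'+γ') * t - 1 := by
      rw [← he2', ← hp']; ring
    rw [l1, l2, hsum]
  constructor
  · have h := (hfac α').symm
    rw [show (α'-α')*(α'-β')*(α'-γ') = 0 by ring] at h
    rcases mul_eq_zero.mp h.symm with h' | h'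
    · rcases mul_eq_zero.mp h' with h'' | h''
      · exact Or.inl (sub_eq_zero.mp h'')
      · exact Or.inr (Or.inl (sub_eq_zero.mp h''))
    · exact Or.inr (Or.inr (sub_eq_zero.mp h'))
  · have h := (hfac β').symm
    rw [show (β'-α')*(β'-β')*(β'-γ') = 0 by ring] at h
    rcases mul_eq_zero.mp h.symm with h' | h'
    · rcases mul_eq_zero.mp h' with h'' | h''
      · exact Or.inl (sub_eq_zero.mp h'')
      · exact Or.inr (Or.inl (sub_eq_zero.mp h''))
    · exact Or.inr (Or.inr (sub_eq_zero.mp h'))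

set_option maxHeartbeats 2000000 in
/-- The zero set of `p n` consists of exactly the `n²` points
`exp(2πi·j₁/(3n)) + exp(2πi·j₂/(3n)) + exp(2πi·j₃/(3n))` with
`j₁, j₂, j₃ ∈ {0, …, 3n−1}`, `j₁ ≢ j₂ (mod 3)` and `3n ∣ j₁ + j₂ + j₃`. -/
theorem zeros_of_p (n : ℕ) (hn : 1 ≤ n) :
    {z : ℂ | p n z = 0} =
      {z : ℂ | ∃ j₁ j₂ j₃ : ℕ, j₁ < 3 * n ∧ j₂ < 3 * n ∧ j₃ < 3 * n ∧
        ¬ (j₁ % 3 = j₂ % 3) ∧ (3 * n) ∣ (j₁ + j₂ + j₃) ∧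
        z = exp (2 * Real.pi * I * j₁ / (3 * n)) + exp (2 * Real.pi * I * j₂ / (3 * n)) +
            exp (2 * Real.pi * I * j₃ / (3 * n))} ∧
    {z : ℂ | p n z = 0}.Finite ∧
    {z : ℂ | p n z = 0}.ncard = n ^ 2 := by
  classical
  have h3n : 3*n ≠ 0 := by omega
  haveI : NeZero (3*n) := ⟨h3n⟩
  set ζ : ℂ := Complex.exp (2 * ↑Real.pi * I / (↑(3*n) : ℂ)) with hζdef
  have hζ : IsPrimitiveRoot ζ (3*n) := Complex.isPrimitiveRoot_exp _ h3n
  have zeq : ∀ j : ℕ, Complex.exp (2 * ↑Real.pi * I * (j:ℂ) / (3 * (n:ℂ))) = ζ^j := by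
    intro j; rw [hζdef, ← Complex.exp_nat_mul]; congr 1; push_cast; ring
  have hζabs : ‖ζ‖ = 1 := by
    rw [hζdef]
    rw [show 2 * (↑Real.pi:ℂ) * I / (↑(3*n) : ℂ) = ((2 * Real.pi / (3*n) : ℝ) : ℂ) * I by
      push_cast; ring]
    exact Complex.norm_exp_ofReal_mul_I _
  have habs : ∀ j : ℕ, ‖ζ^j‖ = 1 := fun j => by rw [norm_pow, hζabs, one_pow]
  set ω : ℂ := ζ^n with hωdef
  have hω3 : ω^3 = 1 := by rw [hωdef, ← pow_mul, mul_comm]; exact hζ.pow_eq_one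
  have hωpow : ∀ j : ℕ, ω^j = ω^(j%3) := by
    intro j
    conv_lhs => rw [← Nat.div_add_mod j 3]
    rw [pow_add, pow_mul, hω3, one_pow, one_mul]
  have hωne : ω ≠ 1 := by
    intro h
    have := (hζ.pow_eq_one_iff_dvd n).mp h
    have := Nat.le_of_dvd (by omega) this
    omega
  have hω2ne : ω^2 ≠ 1 := by
    intro h
    rw [hωdef, ← pow_mul] at h
    have := (hζ.pow_eq_one_iff_dvd (n*2)).mp h
    have := Nat.le_of_dvd (by omega) this
    omega
  have hωne2 : ω ≠ ω^2 := by
    intro h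
    have h2 : ω^2 = 1 := by linear_combination ω * h + hω3
    exact hω2ne h2
  have hpow : ∀ j : ℕ, (ζ^j)^n = ω^(j%3) := by
    intro j
    rw [← pow_mul, mul_comm, pow_mul, ← hωdef, hωpow]
  have amen : ∀ j1 j2 j3 : ℕ, (3*n) ∣ (j1+j2+j3) →
      p n (ζ^j1 + ζ^j2 + ζ^j3) = ω^(j1%3) + ω^(j2%3) + ω^(j3%3) := by
    intro j1 j2 j3 hd
    have hprod : ζ^j1 * ζ^j2 * ζ^j3 = 1 := by
      rw [← pow_add, ← pow_add]; exact (hζ.pow_eq_one_iff_dvd _).mpr hd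
    have h2 := unimod_conj_sum _ _ _ (habs j1) (habs j2) (habs j3) hprod
    rw [p_eq _ _ _ hprod h2 n, hpow, hpow, hpow]
  -- forward direction
  have forward : ∀ z : ℂ, p n z = 0 → ∃ j1 j2 j3 : ℕ, j1 < 3*n ∧ j2 < 3*n ∧ j3 < 3*n ∧
      j1 % 3 ≠ j2 % 3 ∧ (3*n) ∣ (j1+j2+j3) ∧ z = ζ^j1 + ζ^j2 + ζ^j3 := by
    intro z hz
    obtain ⟨α, β, γ, hVsum, hV2, hV3, hfac⟩ := cubic_factor z
    have hs : α^n + β^n + γ^n = 0 := by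
      have hpe := p_eq α β γ hV3 (by rw [hVsum]; exact hV2) n
      rw [hVsum] at hpe
      rw [← hpe]; exact hz
    have hA := abs_one_of n z α β γ hfac hV3 hs
    have hB := abs_one_of n z β γ α (fun t => by rw [hfac t]; ring)
      (by linear_combination hV3) (by linear_combination hs)
    have hC := abs_one_of n z γ α β (fun t => by rw [hfac t]; ring)
      (by linear_combination hV3) (by linear_combination hs)
    have habsn : ∀ (x:ℂ), ‖x‖ = 1 → ‖x^n‖ = 1 :=
      fun x hx => by rw [norm_pow, hx, one_pow]
    have hprodn : α^n * β^n * γ^n = 1 := by rw [← mul_pow, ← mul_pow, hV3, one_pow]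
    have hcubeA : (α^n)^3 = 1 := cube_pow _ _ _ (habsn α hA) (habsn β hB) (habsn γ hC) hs hprodn
    have hcubeB : (β^n)^3 = 1 := cube_pow _ _ _ (habsn β hB) (habsn γ hC) (habsn α hA)
      (by linear_combination hs) (by linear_combination hprodn)
    have hcubeC : (γ^n)^3 = 1 := cube_pow _ _ _ (habsn γ hC) (habsn α hA) (habsn β hB)
      (by linear_combination hs) (by linear_combination hprodn)
    have hA3n : α^(3*n) = 1 := by rw [show 3*n = n*3 by ring, pow_mul]; exact hcubeA
    have hB3n : β^(3*n) = 1 := by rw [show 3*n = n*3 by ring, pow_mul]; exact hcubeB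
    have hC3n : γ^(3*n) = 1 := by rw [show 3*n = n*3 by ring, pow_mul]; exact hcubeC
    obtain ⟨j1, hj1lt, hj1⟩ := hζ.eq_pow_of_pow_eq_one hA3n
    obtain ⟨j2, hj2lt, hj2⟩ := hζ.eq_pow_of_pow_eq_one hB3n
    obtain ⟨j3, hj3lt, hj3⟩ := hζ.eq_pow_of_pow_eq_one hC3n
    refine ⟨j1, j2, j3, hj1lt, hj2lt, hj3lt, ?_, ?_, ?_⟩
    · intro hmod
      apply cube_ne (α^n) (β^n) (γ^n) (habsn α hA) (habsn γ hC) hs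
      rw [← hj1, ← hj2, hpow, hpow, hmod]
    · have h1 : ζ^(j1+j2+j3) = 1 := by rw [pow_add, pow_add, hj1, hj2, hj3]; exact hV3
      exact (hζ.pow_eq_one_iff_dvd _).mp h1
    · rw [hj1, hj2, hj3]; exact hVsum.symm
  -- reverse direction
  have reverse : ∀ j1 j2 j3 : ℕ, j1 % 3 ≠ j2 % 3 → (3*n) ∣ (j1+j2+j3) →
      p n (ζ^j1 + ζ^j2 + ζ^j3) = 0 := by
    intro j1 j2 j3 hne hdvd
    rw [amen j1 j2 j3 hdvd]
    have h3d : 3 ∣ j1 + j2 + j3 := dvd_trans ⟨n, rfl⟩ hdvd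
    apply omega_sum ω hω3 hωne _ _ _ (Nat.mod_lt _ (by norm_num)) (Nat.mod_lt _ (by norm_num))
      (Nat.mod_lt _ (by norm_num)) hne (by omega) (by omega)
  -- set equality with the exp description
  have hseteq : {z : ℂ | p n z = 0} =
      {z : ℂ | ∃ j₁ j₂ j₃ : ℕ, j₁ < 3 * n ∧ j₂ < 3 * n ∧ j₃ < 3 * n ∧
        ¬ (j₁ % 3 = j₂ % 3) ∧ (3 * n) ∣ (j₁ + j₂ + j₃) ∧
        z = exp (2 * Real.pi * I * j₁ / (3 * n)) + exp (2 * Real.pi * I * j₂ / (3 * n)) +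
            exp (2 * Real.pi * I * j₃ / (3 * n))} := by
    ext z
    simp only [Set.mem_setOf_eq]
    constructor
    · intro hz
      obtain ⟨j1, j2, j3, h1, h2, h3, hne, hdvd, hsum⟩ := forward z hz
      exact ⟨j1, j2, j3, h1, h2, h3, hne, hdvd, by rw [zeq, zeq, zeq]; exact hsum⟩
    · rintro ⟨j1, j2, j3, h1, h2, h3, hne, hdvd, rfl⟩
      rw [zeq, zeq, zeq]
      exact reverse j1 j2 j3 hne hdvd
  -- the finite description
  obtain ⟨gf, hgf⟩ : ∃ gf : ℕ × ℕ → ℂ, ∀ a b : ℕ, gf (a, b) =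
      ζ^(3*a) + ζ^(3*b+1) + ζ^(3*n - (3*a + 3*b + 1) % (3*n)) :=
    ⟨fun ab => ζ^(3*ab.1) + ζ^(3*ab.2+1) + ζ^(3*n - (3*ab.1 + 3*ab.2 + 1) % (3*n)),
      fun a b => rfl⟩
  set F : Finset ℂ := Finset.image gf ((Finset.range n) ×ˢ (Finset.range n)) with hF
  have compfacts : ∀ a b : ℕ, (3*n - (3*a + 3*b + 1) % (3*n)) < 3*n ∧
      (3*n) ∣ (3*a + 3*b + 1) + (3*n - (3*a + 3*b + 1) % (3*n)) ∧
      (3*n - (3*a + 3*b + 1) % (3*n)) % 3 = 2 := by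
    intro a b
    obtain ⟨u1, u2, u3⟩ := comp_facts (3*n) (3*a+3*b+1) (by omega) ⟨n, rfl⟩ (by omega)
    exact ⟨u1, u2, by omega⟩
  have hSF : {z : ℂ | p n z = 0} = ↑F := by
    ext z
    simp only [Set.mem_setOf_eq, hF, Finset.coe_image, Set.mem_image, Finset.mem_coe,
      Finset.mem_product, Finset.mem_range, Finset.coe_product, Set.mem_prod]
    constructor
    · intro hz
      obtain ⟨j1, j2, j3, h1, h2, h3, hne, hdvd, hsum⟩ := forward z hz
      have h3d : 3 ∣ j1 + j2 + j3 := dvd_trans ⟨n, rfl⟩ hdvd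
      have hr1 : j1 % 3 < 3 := Nat.mod_lt _ (by norm_num)
      have hr2 : j2 % 3 < 3 := Nat.mod_lt _ (by norm_num)
      -- six cases
      have hc : (j1 % 3 = 0 ∧ j2 % 3 = 1 ∧ j3 % 3 = 2) ∨ (j1 % 3 = 0 ∧ j2 % 3 = 2 ∧ j3 % 3 = 1) ∨
          (j1 % 3 = 1 ∧ j2 % 3 = 0 ∧ j3 % 3 = 2) ∨ (j1 % 3 = 1 ∧ j2 % 3 = 2 ∧ j3 % 3 = 0) ∨
          (j1 % 3 = 2 ∧ j2 % 3 = 0 ∧ j3 % 3 = 1) ∨ (j1 % 3 = 2 ∧ j2 % 3 = 1 ∧ j3 % 3 = 0) := by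
        omega
      rcases hc with ⟨e1,e2,e3⟩ | ⟨e1,e2,e3⟩ | ⟨e1,e2,e3⟩ | ⟨e1,e2,e3⟩ | ⟨e1,e2,e3⟩ | ⟨e1,e2,e3⟩
      · obtain ⟨a, b, ha, hb, hxa, hyb, hwc⟩ := canon n j1 j2 j3 hn h3 e1 e2 h1 h2 hdvd
        exact ⟨(a,b), ⟨ha, hb⟩, by rw [hgf a b, ← hwc, ← hxa, ← hyb]; linear_combination -hsum⟩
      · obtain ⟨a, b, ha, hb, hxa, hyb, hwc⟩ := canon n j1 j3 j2 hn h2 e1 e3 h1 h3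
          (by rw [show j1+j3+j2 = j1+j2+j3 by ring]; exact hdvd)
        exact ⟨(a,b), ⟨ha, hb⟩, by rw [hgf a b, ← hwc, ← hxa, ← hyb]; linear_combination -hsum⟩
      · obtain ⟨a, b, ha, hb, hxa, hyb, hwc⟩ := canon n j2 j1 j3 hn h3 e2 e1 h2 h1
          (by rw [show j2+j1+j3 = j1+j2+j3 by ring]; exact hdvd)
        exact ⟨(a,b), ⟨ha, hb⟩, by rw [hgf a b, ← hwc, ← hxa, ← hyb]; linear_combination -hsum⟩
      · obtain ⟨a, b, ha, hb, hxa, hyb, hwc⟩ := canon n j3 j1 j2 hn h2 e3 e1 h3 h1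
          (by rw [show j3+j1+j2 = j1+j2+j3 by ring]; exact hdvd)
        exact ⟨(a,b), ⟨ha, hb⟩, by rw [hgf a b, ← hwc, ← hxa, ← hyb]; linear_combination -hsum⟩
      · obtain ⟨a, b, ha, hb, hxa, hyb, hwc⟩ := canon n j2 j3 j1 hn h1 e2 e3 h2 h3
          (by rw [show j2+j3+j1 = j1+j2+j3 by ring]; exact hdvd)
        exact ⟨(a,b), ⟨ha, hb⟩, by rw [hgf a b, ← hwc, ← hxa, ← hyb]; linear_combination -hsum⟩
      · obtain ⟨a, b, ha, hb, hxa, hyb, hwc⟩ := canon n j3 j2 j1 hn h1 e3 e2 h3 h2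
          (by rw [show j3+j2+j1 = j1+j2+j3 by ring]; exact hdvd)
        exact ⟨(a,b), ⟨ha, hb⟩, by rw [hgf a b, ← hwc, ← hxa, ← hyb]; linear_combination -hsum⟩
    · rintro ⟨⟨a,b⟩, ⟨ha, hb⟩, rfl⟩
      obtain ⟨u1, u2, u3⟩ := compfacts a b
      rw [hgf a b]
      apply reverse
      · omega
      · rw [show 3*a + (3*b+1) + (3*n - (3*a + 3*b + 1) % (3*n)) =
          (3*a + 3*b + 1) + (3*n - (3*a + 3*b + 1) % (3*n)) by ring]
        exact u2
  -- injectivity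
  have hinj : Set.InjOn gf ↑((Finset.range n) ×ˢ (Finset.range n)) := by
    rintro ⟨a,b⟩ hab ⟨a',b'⟩ hab' heq
    simp only [Finset.coe_product, Set.mem_prod, Finset.mem_coe, Finset.mem_range] at hab hab'
    obtain ⟨u1, u2, u3⟩ := compfacts a b
    obtain ⟨u1', u2', u3'⟩ := compfacts a' b'
    have hprod : ζ^(3*a) * ζ^(3*b+1) * ζ^(3*n - (3*a + 3*b + 1) % (3*n)) = 1 := by
      rw [← pow_add, ← pow_add]
      apply (hζ.pow_eq_one_iff_dvd _).mpr
      rw [show 3*a + (3*b+1) + (3*n - (3*a + 3*b + 1) % (3*n)) =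
          (3*a + 3*b + 1) + (3*n - (3*a + 3*b + 1) % (3*n)) by ring]
      exact u2
    have hprod' : ζ^(3*a') * ζ^(3*b'+1) * ζ^(3*n - (3*a' + 3*b' + 1) % (3*n)) = 1 := by
      rw [← pow_add, ← pow_add]
      apply (hζ.pow_eq_one_iff_dvd _).mpr
      rw [show 3*a' + (3*b'+1) + (3*n - (3*a' + 3*b' + 1) % (3*n)) =
          (3*a' + 3*b' + 1) + (3*n - (3*a' + 3*b' + 1) % (3*n)) by ring]
      exact u2'
    have hsum : ζ^(3*a) + ζ^(3*b+1) + ζ^(3*n - (3*a + 3*b + 1) % (3*n)) =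
        ζ^(3*a') + ζ^(3*b'+1) + ζ^(3*n - (3*a' + 3*b' + 1) % (3*n)) := by
      rw [← hgf a b, ← hgf a' b']
      exact heq
    obtain ⟨hmemA, hmemB⟩ := triple_mem _ _ _ _ _ _ (habs _) (habs _) (habs _)
      (habs _) (habs _) (habs _) hprod hprod' hsum
    have hA : a' = a := by
      rcases hmemA with h | h | h
      · have := hζ.pow_inj (by omega : 3*a' < 3*n) (by omega : 3*a < 3*n) h
        omega
      · exfalso
        have := congrArg (fun x => x^n) h
        rw [hpow, hpow] at this
        rw [show (3*a') % 3 = 0 by omega, show (3*b+1) % 3 = 1 by omega] at this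
        simp at this
        exact hωne this.symm
      · exfalso
        have := congrArg (fun x => x^n) h
        rw [hpow, hpow] at this
        rw [show (3*a') % 3 = 0 by omega, u3] at this
        simp at this
        exact hω2ne this.symm
    have hB : b' = b := by
      rcases hmemB with h | h | h
      · exfalso
        have := congrArg (fun x => x^n) h
        rw [hpow, hpow] at this
        rw [show (3*b'+1) % 3 = 1 by omega, show (3*a) % 3 = 0 by omega] at this
        simp at this
        exact hωne this
      · have := hζ.pow_inj (by omega : 3*b'+1 < 3*n) (by omega : 3*b+1 < 3*n) h
        omega
      · exfalso
        have := congrArg (fun x => x^n) h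
        rw [hpow, hpow] at this
        rw [show (3*b'+1) % 3 = 1 by omega, u3, pow_one] at this
        exact hωne2 this
    simp [hA, hB]
  refine ⟨hseteq, ?_, ?_⟩
  · rw [hSF]; exact F.finite_toSet
  · rw [hSF, Set.ncard_coe_finset, hF, Finset.card_image_of_injOn hinj]
    rw [Finset.card_product, Finset.card_range]
    ring
end
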